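/- arXiv:1307.4197 — 9 statements merged into one kernel-verified Lean document; each statement's English description precedes it below -/
import Mathlib

section
/- Let S be a Steiner system S(5,8,24) on a 24-element set Ω, let ∞, 0, 1 ∈ Ω be distinct points, and let K₀ ∈ S be an octad with 0 ∈ K₀ and ∞ ∉ K₀, 1 ∉ K₀. Then the number of octads K ∈ S satisfying ∞ ∈ K, 0 ∈ K, 1 ∉ K and |K ∩ K₀| = 4 is exactly 28. -/
/-- A Steiner system `S(5,8,24)`: `Ω` has 24 elements, every block (octad) has 8
elements, and every 5-element subset of `Ω` is contained in exactly one octad. -/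
def IsSteinerSystem_5_8_24 {Ω : Type*} [Fintype Ω] [DecidableEq Ω]
    (S : Finset (Finset Ω)) : Prop :=
  Fintype.card Ω = 24 ∧
  (∀ K ∈ S, K.card = 8) ∧
  ∀ A : Finset Ω, A.card = 5 → ∃! K, K ∈ S ∧ A ⊆ K

open Finset

section Aux
variable {Ω : Type*} [DecidableEq Ω]

theorem card_between {Ω : Type*} [DecidableEq Ω] (T X : Finset Ω) (hTX : T ⊆ X) (n : ℕ) (hn : T.card ≤ n) :
    ((X.powersetCard n).filter (fun A => T ⊆ A)).card
      = (X.card - T.card).choose (n - T.card) := by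
  rw [show X.card - T.card = (X \ T).card from (card_sdiff_of_subset hTX).symm,
     ← Finset.card_powersetCard]
  apply Finset.card_bij' (fun A _ => A \ T) (fun B _ => B ∪ T)
  · intro A hA
    simp only [mem_filter, mem_powersetCard] at hA ⊢
    exact ⟨sdiff_subset_sdiff hA.1.1 Subset.rfl, by rw [card_sdiff_of_subset hA.2, hA.1.2]⟩
  · intro B hB
    simp only [mem_powersetCard] at hB
    have hBX : B ⊆ X \ T := hB.1
    have hd : Disjoint B T := (subset_sdiff.mp hBX).2
    simp only [mem_filter, mem_powersetCard]
    refine ⟨⟨union_subset (hBX.trans sdiff_subset) hTX, ?_⟩, subset_union_right⟩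
    rw [card_union_of_disjoint hd, hB.2]
    omega
  · intro A hA
    simp only [mem_filter] at hA
    exact sdiff_union_of_subset hA.2
  · intro B hB
    simp only [mem_powersetCard] at hB
    have hd : Disjoint B T := (subset_sdiff.mp hB.1).2
    rw [union_sdiff_right, sdiff_eq_self_of_disjoint hd]

theorem swap_count (PP F : Finset (Finset Ω)) :
    ∑ P ∈ PP, ((F.filter (fun K => P ⊆ K)).card)
      = ∑ K ∈ F, ((PP.filter (fun P => P ⊆ K)).card) := by
  simp_rw [Finset.card_filter]
  exact Finset.sum_comm

theorem blocks_count [Fintype Ω] (S : Finset (Finset Ω)) (hS : IsSteinerSystem_5_8_24 S)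
    (T : Finset Ω) (hT : T.card ≤ 5) :
    (S.filter (fun K => T ⊆ K)).card * (8 - T.card).choose (5 - T.card)
      = (24 - T.card).choose (5 - T.card) := by
  obtain ⟨hcard, hoct, huniq⟩ := hS
  set 𝒜 := ((Finset.univ : Finset Ω).powersetCard 5).filter (fun A => T ⊆ A) with h𝒜
  have hA : 𝒜.card = (24 - T.card).choose (5 - T.card) := by
    rw [h𝒜, card_between T univ (subset_univ T) 5 hT, card_univ, hcard]
  -- each A ∈ 𝒜 in exactly one block
  have h1 : ∀ A ∈ 𝒜, (S.filter (fun K => A ⊆ K)).card = 1 := by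
    intro A hA'
    simp only [h𝒜, mem_filter, mem_powersetCard] at hA'
    obtain ⟨K, hK, hKu⟩ := huniq A hA'.1.2
    rw [Finset.card_eq_one]
    refine ⟨K, Finset.eq_singleton_iff_unique_mem.mpr ⟨mem_filter.mpr ⟨hK.1, hK.2⟩, ?_⟩⟩
    intro K' hK'
    simp only [mem_filter] at hK'
    exact hKu K' hK'
  have h2 : ∑ A ∈ 𝒜, (S.filter (fun K => A ⊆ K)).card = 𝒜.card := by
    rw [Finset.sum_congr rfl h1]; simp
  rw [swap_count] at h2
  -- per-block count
  have h3 : ∀ K ∈ S, (𝒜.filter (fun A => A ⊆ K)).card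
      = if T ⊆ K then (8 - T.card).choose (5 - T.card) else 0 := by
    intro K hK
    split_ifs with hTK
    · rw [show 𝒜.filter (fun A => A ⊆ K) = (K.powersetCard 5).filter (fun A => T ⊆ A) by
        ext A
        simp only [h𝒜, mem_filter, mem_powersetCard, subset_univ, true_and]
        tauto]
      rw [card_between T K hTK 5 hT, hoct K hK]
    · rw [Finset.card_eq_zero, Finset.filter_eq_empty_iff]
      intro A hA'
      simp only [h𝒜, mem_filter] at hA'
      exact fun hAK => hTK (hA'.2.trans hAK)
  rw [Finset.sum_congr rfl h3, Finset.sum_ite, Finset.sum_const_zero, add_zero,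
    Finset.sum_const, smul_eq_mul] at h2
  rw [← hA, ← h2]

theorem same_block [Fintype Ω] (S : Finset (Finset Ω)) (hS : IsSteinerSystem_5_8_24 S)
    {K K' : Finset Ω} (hK : K ∈ S) (hK' : K' ∈ S) (h5 : 5 ≤ (K ∩ K').card) :
    K = K' := by
  obtain ⟨A, hA, hA5⟩ := Finset.exists_subset_card_eq h5
  obtain ⟨B, hB, hBu⟩ := hS.2.2 A hA5
  have h1 : K = B := hBu K ⟨hK, hA.trans inter_subset_left⟩
  have h2 : K' = B := hBu K' ⟨hK', hA.trans inter_subset_right⟩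
  rw [h1, h2]

theorem filter_powersetCard (X Y : Finset Ω) (t : ℕ) :
    (X.powersetCard t).filter (fun P => P ⊆ Y) = (X ∩ Y).powersetCard t := by
  ext P
  simp only [mem_filter, mem_powersetCard, subset_inter_iff]
  tauto

theorem even_inter [Fintype Ω] (S : Finset (Finset Ω)) (hS : IsSteinerSystem_5_8_24 S)
    (K₀ : Finset Ω) (hK₀ : K₀ ∈ S) :
    ∀ K ∈ S, K ≠ K₀ → (K₀ ∩ K).card = 0 ∨ (K₀ ∩ K).card = 2 ∨ (K₀ ∩ K).card = 4 := by
  have h8 : K₀.card = 8 := hS.2.1 K₀ hK₀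
  -- the five equations
  have lam : ∀ t : ℕ, t ≤ 5 → ∀ T : Finset Ω, T.card = t →
      (S.filter (fun K => T ⊆ K)).card * (8 - t).choose (5 - t) = (24 - t).choose (5 - t) := by
    intro t ht T hT
    have := blocks_count S hS T (by omega)
    rwa [hT] at this
  have eqt : ∀ t : ℕ, t ≤ 5 →
      (∑ K ∈ S, ((K₀ ∩ K).card.choose t)) * (8 - t).choose (5 - t)
        = Nat.choose 8 t * (24 - t).choose (5 - t) := by
    intro t ht
    have : ∑ K ∈ S, ((K₀ ∩ K).card.choose t)
        = ∑ P ∈ K₀.powersetCard t, ((S.filter (fun K => P ⊆ K)).card) := by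
      rw [swap_count]
      refine Finset.sum_congr rfl fun K _ => ?_
      rw [filter_powersetCard, Finset.card_powersetCard]
    rw [this, Finset.sum_mul]
    have : ∀ P ∈ K₀.powersetCard t,
        (S.filter (fun K => P ⊆ K)).card * (8 - t).choose (5 - t)
          = (24 - t).choose (5 - t) := by
      intro P hP
      rw [mem_powersetCard] at hP
      exact lam t ht P hP.2
    rw [Finset.sum_congr rfl this, Finset.sum_const, Finset.card_powersetCard, h8,
      smul_eq_mul]
  -- fiberwise decomposition
  set m : ℕ → ℕ := fun i => (S.filter (fun K => (K₀ ∩ K).card = i)).card with hm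
  have fib : ∀ f : ℕ → ℕ, ∑ K ∈ S, f ((K₀ ∩ K).card) = ∑ i ∈ range 9, m i * f i := by
    intro f
    rw [← Finset.sum_fiberwise_of_maps_to (g := fun K => (K₀ ∩ K).card) (t := range 9)
      (fun K hK => by
        rw [mem_range]
        show (K₀ ∩ K).card < 9
        have : (K₀ ∩ K).card ≤ K₀.card := card_le_card inter_subset_left
        omega)]
    refine Finset.sum_congr rfl fun i _ => ?_
    rw [Finset.sum_congr rfl (fun K hK => by
      rw [(mem_filter.mp hK).2]), Finset.sum_const, smul_eq_mul, hm]
  have m567 : m 5 = 0 ∧ m 6 = 0 ∧ m 7 = 0 := by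
    refine ⟨?_, ?_, ?_⟩ <;>
    · rw [hm, Finset.card_eq_zero, Finset.filter_eq_empty_iff]
      intro K hK hc
      have := same_block S hS hK₀ hK (by omega)
      rw [← this, inter_self, h8] at hc
      omega
  have m8 : m 8 = 1 := by
    rw [hm, Finset.card_eq_one]
    refine ⟨K₀, Finset.eq_singleton_iff_unique_mem.mpr ⟨mem_filter.mpr ⟨hK₀, by
      rw [inter_self, h8]⟩, fun K hK => ?_⟩⟩
    rw [mem_filter] at hK
    exact same_block S hS hK.1 hK₀ (by rw [inter_comm]; omega)
  -- extract the five numeric equations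
  have E0 := eqt 0 (by norm_num)
  have E1 := eqt 1 (by norm_num)
  have E2 := eqt 2 (by norm_num)
  have E3 := eqt 3 (by norm_num)
  have E4 := eqt 4 (by norm_num)
  rw [fib (fun i => i.choose 0)] at E0
  rw [fib (fun i => i.choose 1)] at E1
  rw [fib (fun i => i.choose 2)] at E2
  rw [fib (fun i => i.choose 3)] at E3
  rw [fib (fun i => i.choose 4)] at E4
  simp only [Finset.sum_range_succ, Finset.sum_range_zero] at E0 E1 E2 E3 E4
  norm_num [Nat.choose] at E0 E1 E2 E3 E4
  -- solve
  have hm1 : m 1 = 0 ∧ m 3 = 0 := by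
    obtain ⟨h5, h6, h7⟩ := m567
    omega
  simp only [hm] at hm1
  intro K hK hne
  have hle : (K₀ ∩ K).card ≤ 4 := by
    by_contra h
    exact hne (same_block S hS hK hK₀ (by rw [inter_comm]; omega))
  have h1 : (K₀ ∩ K).card ≠ 1 := by
    intro hc
    have : K ∈ S.filter (fun K => (K₀ ∩ K).card = 1) := mem_filter.mpr ⟨hK, hc⟩
    have := Finset.card_pos.mpr ⟨K, this⟩
    omega
  have h3 : (K₀ ∩ K).card ≠ 3 := by
    intro hc
    have : K ∈ S.filter (fun K => (K₀ ∩ K).card = 3) := mem_filter.mpr ⟨hK, hc⟩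
    have := Finset.card_pos.mpr ⟨K, this⟩
    omega
  omega

end Aux

theorem count_octads_A6A1 {Ω : Type*} [Fintype Ω] [DecidableEq Ω]
    (S : Finset (Finset Ω)) (hS : IsSteinerSystem_5_8_24 S)
    (pinf p0 p1 : Ω) (h01 : p0 ≠ p1) (hinf0 : pinf ≠ p0) (hinf1 : pinf ≠ p1)
    (K₀ : Finset Ω) (hK₀S : K₀ ∈ S)
    (h0K : p0 ∈ K₀) (hinfK : pinf ∉ K₀) (h1K : p1 ∉ K₀) :
    (S.filter fun K => pinf ∈ K ∧ p0 ∈ K ∧ p1 ∉ K ∧ (K ∩ K₀).card = 4).card = 28 := by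
  have h8 : K₀.card = 8 := hS.2.1 K₀ hK₀S
  set F := S.filter (fun K => pinf ∈ K ∧ p0 ∈ K ∧ p1 ∉ K) with hF
  set A := K₀.erase p0 with hAdef
  have hA7 : A.card = 7 := by rw [hAdef, card_erase_of_mem h0K, h8]
  -- left count: each pair P gives 4 blocks
  have L1 : ∀ P ∈ A.powersetCard 2, (F.filter (fun K => P ⊆ K)).card = 4 := by
    intro P hP
    rw [mem_powersetCard] at hP
    obtain ⟨hPA, hP2⟩ := hP
    have hPK₀ : P ⊆ K₀ := hPA.trans (erase_subset _ _)
    have hp0P : p0 ∉ P := fun h => (Finset.notMem_erase p0 K₀) (hPA h)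
    have hpinfP : pinf ∉ P := fun h => hinfK (hPK₀ h)
    have hp1P : p1 ∉ P := fun h => h1K (hPK₀ h)
    set T4 := insert pinf (insert p0 P) with hT4
    set T5 := insert p1 T4 with hT5
    have hT4c : T4.card = 4 := by
      rw [hT4, card_insert_of_notMem (fun h => (Finset.mem_insert.mp h).elim hinf0 hpinfP),
        card_insert_of_notMem hp0P, hP2]
    have hT5c : T5.card = 5 := by
      rw [hT5, card_insert_of_notMem (fun h => by
        rcases Finset.mem_insert.mp h with h | h
        · exact hinf1 h.symm
        · rcases Finset.mem_insert.mp h with h | h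
          · exact h01 h.symm
          · exact hp1P h), hT4c]
    have N4 : (S.filter (fun K => T4 ⊆ K)).card = 5 := by
      have := blocks_count S hS T4 (by omega)
      rw [hT4c] at this
      norm_num [Nat.choose] at this
      omega
    have N5 : (S.filter (fun K => T5 ⊆ K)).card = 1 := by
      have := blocks_count S hS T5 (by omega)
      rw [hT5c] at this
      norm_num [Nat.choose] at this
      omega
    have hsplit := Finset.card_filter_add_card_filter_not
      (s := S.filter (fun K => T4 ⊆ K)) (p := fun K => p1 ∈ K)
    rw [Finset.filter_filter, Finset.filter_filter] at hsplit
    have e5 : S.filter (fun K => T4 ⊆ K ∧ p1 ∈ K) = S.filter (fun K => T5 ⊆ K) := by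
      refine Finset.filter_congr fun K _ => ?_
      simp only [hT5, hT4, insert_subset_iff]
      tauto
    have eF : F.filter (fun K => P ⊆ K) = S.filter (fun K => T4 ⊆ K ∧ ¬ p1 ∈ K) := by
      rw [hF, Finset.filter_filter]
      refine Finset.filter_congr fun K _ => ?_
      simp only [hT4, insert_subset_iff]
      tauto
    rw [eF]
    rw [e5, N5, N4] at hsplit
    omega
  have Lsum : ∑ P ∈ A.powersetCard 2, (F.filter (fun K => P ⊆ K)).card = 84 := by
    rw [Finset.sum_congr rfl L1, Finset.sum_const, Finset.card_powersetCard, hA7,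
      smul_eq_mul]
    decide
  -- right count
  have hFS : ∀ K ∈ F, K ∈ S ∧ pinf ∈ K ∧ p0 ∈ K ∧ p1 ∉ K := by
    intro K hK
    rw [hF, mem_filter] at hK
    tauto
  have R1 : ∀ K ∈ F, ((A.powersetCard 2).filter (fun P => P ⊆ K)).card
      = if (K ∩ K₀).card = 4 then 3 else 0 := by
    intro K hK
    obtain ⟨hKS, hpinfK, hp0K, hp1K⟩ := hFS K hK
    have hne : K ≠ K₀ := fun h => hinfK (h ▸ hpinfK)
    rw [filter_powersetCard, Finset.card_powersetCard]
    have hAK : A ∩ K = (K₀ ∩ K).erase p0 := by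
      rw [hAdef, Finset.erase_inter]
    have hmem : p0 ∈ K₀ ∩ K := mem_inter.mpr ⟨h0K, hp0K⟩
    have hcard : (A ∩ K).card = (K₀ ∩ K).card - 1 := by
      rw [hAK, card_erase_of_mem hmem]
    have hcc : (K ∩ K₀).card = (K₀ ∩ K).card := by rw [inter_comm]
    have heven := even_inter S hS K₀ hK₀S K hKS hne
    have hpos : 1 ≤ (K₀ ∩ K).card := Finset.card_pos.mpr ⟨p0, hmem⟩
    rcases heven with h | h | h
    · omega
    · rw [hcard, h]
      simp [hcc, h, Nat.choose]
    · rw [hcard, h]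
      simp [hcc, h, Nat.choose]
  have Rsum : ∑ K ∈ F, ((A.powersetCard 2).filter (fun P => P ⊆ K)).card
      = 3 * (F.filter (fun K => (K ∩ K₀).card = 4)).card := by
    rw [Finset.sum_congr rfl R1, Finset.sum_ite, Finset.sum_const, Finset.sum_const_zero,
      add_zero, smul_eq_mul, mul_comm]
  have key : 84 = 3 * (F.filter (fun K => (K ∩ K₀).card = 4)).card := by
    rw [← Lsum, swap_count, Rsum]
  have efin : S.filter (fun K => pinf ∈ K ∧ p0 ∈ K ∧ p1 ∉ K ∧ (K ∩ K₀).card = 4)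
      = F.filter (fun K => (K ∩ K₀).card = 4) := by
    rw [hF, Finset.filter_filter]
    refine Finset.filter_congr fun K _ => ?_
    tauto
  rw [efin]
  omega
end

section
/- Let S be a Steiner system S(5,8,24) on a 24-element set Ω, let ∞, 0, 1 ∈ Ω be distinct points, and let K₀ ∈ S be an octad with 0 ∈ K₀ and ∞ ∉ K₀, 1 ∉ K₀. Then the number of pairs (k, K), where k ∈ Ω with k ∉ {∞, 0, 1} and K ∈ S is an octad satisfying {∞, 0, 1, k} ⊆ K and K ∩ K₀ = {0, k}, is exactly 14. -/
open Finset

section Aux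

variable {Ω : Type*} [Fintype Ω] [DecidableEq Ω]

omit [Fintype Ω] in
/-- Generic double counting: pairs (x, K) with x ∈ s, K ∈ F, x ∈ K. -/
lemma SS_double_count (s : Finset Ω) (F : Finset (Finset Ω)) :
    ∑ x ∈ s, (F.filter fun K => x ∈ K).card = ∑ K ∈ F, (K ∩ s).card := by
  simp only [Finset.card_filter]
  rw [Finset.sum_comm]
  refine Finset.sum_congr rfl fun K _ => ?_
  rw [← Finset.card_filter, Finset.filter_mem_eq_inter, Finset.inter_comm]

lemma SS_lam5 {S : Finset (Finset Ω)} (hS : IsSteinerSystem_5_8_24 S)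
    {A : Finset Ω} (hA : A.card = 5) :
    (S.filter fun K => A ⊆ K).card = 1 := by
  obtain ⟨K, hK, hu⟩ := hS.2.2 A hA
  rw [Finset.card_eq_one]
  refine ⟨K, ?_⟩
  ext L
  simp only [Finset.mem_filter, Finset.mem_singleton]
  constructor
  · rintro ⟨h1, h2⟩; exact hu L ⟨h1, h2⟩
  · rintro rfl; exact hK

/-- For a set of size `j ≤ 4`, the number of blocks containing it,
times (8 - j), equals n * (24 - j) where n is the count for (j+1)-sets. -/
lemma SS_lam_step {S : Finset (Finset Ω)} (hS : IsSteinerSystem_5_8_24 S)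
    {A : Finset Ω} {j n : ℕ} (hA : A.card = j) (_hj : j ≤ 4)
    (h : ∀ x : Ω, x ∉ A → ((S.filter fun K => insert x A ⊆ K).card = n)) :
    (S.filter fun K => A ⊆ K).card * (8 - j) = n * (24 - j) := by
  have key := SS_double_count Aᶜ (S.filter fun K => A ⊆ K)
  -- LHS of key: each x gives n
  have hL : ∑ x ∈ Aᶜ, ((S.filter fun K => A ⊆ K).filter fun K => x ∈ K).card
      = n * (24 - j) := by
    have hpt : ∀ x ∈ Aᶜ, ((S.filter fun K => A ⊆ K).filter fun K => x ∈ K).card = n := by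
      intro x hx
      have hx' : x ∉ A := by simpa using hx
      rw [Finset.filter_filter, ← h x hx']
      congr 1
      ext K
      simp only [Finset.mem_filter]
      constructor
      · rintro ⟨h1, h2, h3⟩; exact ⟨h1, Finset.insert_subset h3 h2⟩
      · rintro ⟨h1, h2⟩
        rw [Finset.insert_subset_iff] at h2
        exact ⟨h1, h2.2, h2.1⟩
    rw [Finset.sum_congr rfl hpt, Finset.sum_const, smul_eq_mul,
      Finset.card_compl, hS.1, hA, mul_comm]
  have hR : ∑ K ∈ (S.filter fun K => A ⊆ K), (K ∩ Aᶜ).card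
      = (S.filter fun K => A ⊆ K).card * (8 - j) := by
    have hpt : ∀ K ∈ (S.filter fun K => A ⊆ K), (K ∩ Aᶜ).card = 8 - j := by
      intro K hK
      simp only [Finset.mem_filter] at hK
      have : K ∩ Aᶜ = K \ A := by ext y; simp [Finset.mem_sdiff]
      rw [this, Finset.card_sdiff_of_subset hK.2, hS.2.1 K hK.1, hA]
    rw [Finset.sum_congr rfl hpt, Finset.sum_const, smul_eq_mul]
  rw [← hL, ← hR, key]

lemma SS_lam4 {S : Finset (Finset Ω)} (hS : IsSteinerSystem_5_8_24 S)
    {A : Finset Ω} (hA : A.card = 4) :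
    (S.filter fun K => A ⊆ K).card = 5 := by
  have := SS_lam_step hS hA (by norm_num) (n := 1) (fun x hx => SS_lam5 hS (by
    rw [Finset.card_insert_of_notMem hx, hA]))
  omega

lemma SS_lam3 {S : Finset (Finset Ω)} (hS : IsSteinerSystem_5_8_24 S)
    {A : Finset Ω} (hA : A.card = 3) :
    (S.filter fun K => A ⊆ K).card = 21 := by
  have := SS_lam_step hS hA (by norm_num) (n := 5) (fun x hx => SS_lam4 hS (by
    rw [Finset.card_insert_of_notMem hx, hA]))
  omega

lemma SS_inter_le_four {S : Finset (Finset Ω)} (hS : IsSteinerSystem_5_8_24 S)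
    {K K' : Finset Ω} (hK : K ∈ S) (hK' : K' ∈ S) (hne : K ≠ K') :
    (K ∩ K').card ≤ 4 := by
  by_contra h
  push_neg at h
  have h5 : 5 ≤ (K ∩ K').card := h
  obtain ⟨B, hB, hB5⟩ := Finset.exists_subset_card_eq h5
  obtain ⟨L, -, hu⟩ := hS.2.2 B hB5
  have h1 : K = L := hu K ⟨hK, hB.trans Finset.inter_subset_left⟩
  have h2 : K' = L := hu K' ⟨hK', hB.trans Finset.inter_subset_right⟩
  exact hne (h1.trans h2.symm)

/-- If every term is ≤ 1 and the sum equals the cardinality, every term is 1. -/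
lemma SS_all_one {α : Type*} {F : Finset α} {f : α → ℕ}
    (h1 : ∀ i ∈ F, f i ≤ 1) (h : ∑ i ∈ F, f i = F.card) :
    ∀ i ∈ F, f i = 1 := by
  intro i hi
  by_contra hne
  have hi0 : f i < 1 := lt_of_le_of_ne (h1 i hi) hne
  have hlt : ∑ i ∈ F, f i < ∑ _i ∈ F, 1 :=
    Finset.sum_lt_sum h1 ⟨i, hi, hi0⟩
  rw [Finset.sum_const, smul_eq_mul, mul_one, h] at hlt
  exact lt_irrefl _ hlt

/-- Key lemma: any block other than K₀ containing a 3-subset of K₀ meets K₀ in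
exactly 4 points. -/
lemma SS_key {S : Finset (Finset Ω)} (hS : IsSteinerSystem_5_8_24 S)
    {K₀ : Finset Ω} (hK₀ : K₀ ∈ S) {T : Finset Ω} (hT : T ⊆ K₀) (hT3 : T.card = 3)
    {K : Finset Ω} (hK : K ∈ S) (hne : K ≠ K₀) (hTK : T ⊆ K) :
    (K ∩ K₀).card = 4 := by
  set F := S.filter (fun L => T ⊆ L ∧ L ≠ K₀) with hF
  have hFcard : F.card = 20 := by
    have h21 := SS_lam3 hS hT3
    have : F = (S.filter fun L => T ⊆ L).erase K₀ := by
      ext L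
      simp only [hF, Finset.mem_filter, Finset.mem_erase]
      tauto
    rw [this, Finset.card_erase_of_mem (Finset.mem_filter.mpr ⟨hK₀, hT⟩), h21]
  -- sum over x in K₀ \ T of blocks in F containing x = 20
  have hsum : ∑ x ∈ K₀ \ T, (F.filter fun L => x ∈ L).card = 20 := by
    have hpt : ∀ x ∈ K₀ \ T, (F.filter fun L => x ∈ L).card = 4 := by
      intro x hx
      have hx' := Finset.mem_sdiff.mp hx
      have hc4 : (insert x T).card = 4 := by
        rw [Finset.card_insert_of_notMem hx'.2, hT3]
      have h5 := SS_lam4 hS hc4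
      have : F.filter (fun L => x ∈ L) = (S.filter fun L => insert x T ⊆ L).erase K₀ := by
        ext L
        simp only [hF, Finset.filter_filter, Finset.mem_filter, Finset.mem_erase,
          Finset.insert_subset_iff]
        tauto
      rw [this, Finset.card_erase_of_mem
        (Finset.mem_filter.mpr ⟨hK₀, Finset.insert_subset hx'.1 hT⟩), h5]
    rw [Finset.sum_congr rfl hpt, Finset.sum_const, smul_eq_mul,
      Finset.card_sdiff_of_subset hT, hS.2.1 K₀ hK₀, hT3]
  have hsum2 : ∑ L ∈ F, (L ∩ (K₀ \ T)).card = 20 := by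
    rw [← SS_double_count (K₀ \ T) F, hsum]
  have hle : ∀ L ∈ F, (L ∩ (K₀ \ T)).card ≤ 1 := by
    intro L hL
    simp only [hF, Finset.mem_filter] at hL
    have h4 := SS_inter_le_four hS hL.1 hK₀ hL.2.2
    have heq : L ∩ (K₀ \ T) = (L ∩ K₀) \ T := by
      ext y; simp [Finset.mem_sdiff]; tauto
    have hsub : T ⊆ L ∩ K₀ := Finset.subset_inter hL.2.1 hT
    rw [heq, Finset.card_sdiff_of_subset hsub]
    omega
  have hone := SS_all_one hle (by rw [hsum2, hFcard])
  have hKF : K ∈ F := by simp [hF, Finset.mem_filter, hK, hTK, hne]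
  have h1 := hone K hKF
  have heq : K ∩ (K₀ \ T) = (K ∩ K₀) \ T := by
    ext y; simp [Finset.mem_sdiff]; tauto
  have hsub : T ⊆ K ∩ K₀ := Finset.subset_inter hTK hT
  rw [heq, Finset.card_sdiff_of_subset hsub, hT3] at h1
  have := Finset.card_le_card hsub
  omega

end Aux

theorem count_pairs_D7_z {Ω : Type*} [Fintype Ω] [DecidableEq Ω]
    (S : Finset (Finset Ω)) (hS : IsSteinerSystem_5_8_24 S)
    (pinf p0 p1 : Ω) (h01 : p0 ≠ p1) (hinf0 : pinf ≠ p0) (hinf1 : pinf ≠ p1)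
    (K₀ : Finset Ω) (hK₀S : K₀ ∈ S)
    (h0K : p0 ∈ K₀) (hinfK : pinf ∉ K₀) (h1K : p1 ∉ K₀) :
    (((Finset.univ : Finset Ω) ×ˢ S).filter fun kK =>
        kK.1 ∉ ({pinf, p0, p1} : Finset Ω) ∧
        ({pinf, p0, p1, kK.1} : Finset Ω) ⊆ kK.2 ∧
        kK.2 ∩ K₀ = {p0, kK.1}).card = 14 := by
  classical
  -- convert to a sum over k
  have hconv : (((Finset.univ : Finset Ω) ×ˢ S).filter fun kK =>
        kK.1 ∉ ({pinf, p0, p1} : Finset Ω) ∧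
        ({pinf, p0, p1, kK.1} : Finset Ω) ⊆ kK.2 ∧
        kK.2 ∩ K₀ = {p0, kK.1}).card
      = ∑ k ∈ (Finset.univ : Finset Ω), (S.filter fun K =>
          k ∉ ({pinf, p0, p1} : Finset Ω) ∧
          ({pinf, p0, p1, k} : Finset Ω) ⊆ K ∧
          K ∩ K₀ = {p0, k}).card := by
    rw [Finset.card_filter, Finset.sum_product]
    refine Finset.sum_congr rfl fun k _ => ?_
    rw [Finset.card_filter]
  rw [hconv]
  -- per-k count
  have hper : ∀ k : Ω, (S.filter fun K =>
          k ∉ ({pinf, p0, p1} : Finset Ω) ∧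
          ({pinf, p0, p1, k} : Finset Ω) ⊆ K ∧
          K ∩ K₀ = {p0, k}).card = if k ∈ K₀.erase p0 then 2 else 0 := by
    intro k
    by_cases hk : k ∈ K₀.erase p0
    · rw [if_pos hk]
      obtain ⟨hkne0, hkK₀⟩ := Finset.mem_erase.mp hk
      have hkinf : k ≠ pinf := fun h => hinfK (h ▸ hkK₀)
      have hk1 : k ≠ p1 := fun h => h1K (h ▸ hkK₀)
      -- the filter simplifies since k ∉ {pinf,p0,p1} holds
      have hknot : k ∉ ({pinf, p0, p1} : Finset Ω) := by
        simp [hkinf, hkne0, hk1]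
      set A : Finset Ω := {pinf, p0, p1, k} with hA
      have hAcard : A.card = 4 := by
        rw [hA]
        rw [Finset.card_insert_of_notMem (by simp [hinf0, hinf1, Ne.symm hkinf]),
          Finset.card_insert_of_notMem (by simp [h01, Ne.symm hkne0]),
          Finset.card_insert_of_notMem (by simp [Ne.symm hk1]), Finset.card_singleton]
      have hfe : (S.filter fun K =>
          k ∉ ({pinf, p0, p1} : Finset Ω) ∧ A ⊆ K ∧ K ∩ K₀ = {p0, k})
          = (S.filter fun K => A ⊆ K ∧ K ∩ K₀ = {p0, k}) := by
        refine Finset.filter_congr fun K _ => ?_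
        simp [hknot]
      rw [hfe]
      -- G = blocks containing A, card 5; B = those with bigger intersection, card 3
      set G := S.filter (fun K => A ⊆ K) with hG
      have hGcard : G.card = 5 := SS_lam4 hS hAcard
      have hsubA : ∀ K ∈ G, {p0, k} ⊆ K ∩ K₀ ∧ K ≠ K₀ := by
        intro K hK
        simp only [hG, Finset.mem_filter, hA, Finset.insert_subset_iff] at hK
        obtain ⟨hKS, hinf', h0', h1', hk'⟩ := hK
        refine ⟨?_, fun h => hinfK (h ▸ hinf')⟩
        intro y hy
        simp only [Finset.mem_insert, Finset.mem_singleton] at hy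
        rcases hy with rfl | rfl
        · exact Finset.mem_inter.mpr ⟨h0', h0K⟩
        · exact Finset.mem_inter.mpr ⟨by simpa using hk', hkK₀⟩
      set B := G.filter (fun K => K ∩ K₀ ≠ {p0, k}) with hB
      -- every K in B has |K ∩ K₀| = 4
      have hB4 : ∀ K ∈ B, (K ∩ K₀).card = 4 := by
        intro K hK
        simp only [hB, Finset.mem_filter] at hK
        obtain ⟨hKG, hKne⟩ := hK
        obtain ⟨hsub, hKneK₀⟩ := hsubA K hKG
        have hKS : K ∈ S := (Finset.mem_filter.mp hKG).1
        -- find third point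
        have hstrict : {p0, k} ⊂ K ∩ K₀ := Finset.ssubset_iff_subset_ne.mpr ⟨hsub, Ne.symm hKne⟩
        obtain ⟨x, hxKK₀, hxnot⟩ := Finset.exists_of_ssubset hstrict
        have hT3 : (insert x {p0, k} : Finset Ω).card = 3 := by
          rw [Finset.card_insert_of_notMem hxnot,
            Finset.card_insert_of_notMem (by simp [hkne0.symm]), Finset.card_singleton]
        have hTsub : (insert x {p0, k} : Finset Ω) ⊆ K₀ :=
          Finset.insert_subset ((Finset.mem_inter.mp hxKK₀).2)
            (hsub.trans Finset.inter_subset_right)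
        have hTK : (insert x {p0, k} : Finset Ω) ⊆ K :=
          Finset.insert_subset ((Finset.mem_inter.mp hxKK₀).1)
            (hsub.trans Finset.inter_subset_left)
        exact SS_key hS hK₀S hTsub hT3 hKS hKneK₀ hTK
      -- double count: B has 3 elements
      have hkA : k ∈ A := by simp [hA]
      have hBcard : B.card = 3 := by
        have hsum : ∑ x ∈ K₀ \ {p0, k}, (B.filter fun L => x ∈ L).card = 6 := by
          have hpt : ∀ x ∈ K₀ \ {p0, k}, (B.filter fun L => x ∈ L).card = 1 := by
            intro x hx
            have hx' := Finset.mem_sdiff.mp hx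
            have hxK₀ := hx'.1
            have hxnot := hx'.2
            have hxp0 : x ≠ p0 := fun h => hxnot (by simp [h])
            have hxk : x ≠ k := fun h => hxnot (by simp [h])
            have hxA : x ∉ A := by
              simp only [hA, Finset.mem_insert, Finset.mem_singleton]
              push_neg
              exact ⟨fun h => hinfK (h ▸ hxK₀), hxp0, fun h => h1K (h ▸ hxK₀), hxk⟩
            have hc5 : (insert x A).card = 5 := by
              rw [Finset.card_insert_of_notMem hxA, hAcard]
            have hfeq : B.filter (fun L => x ∈ L) = S.filter (fun L => insert x A ⊆ L) := by
              ext L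
              simp only [hB, hG, Finset.mem_filter]
              constructor
              · rintro ⟨⟨⟨hLS, hAL⟩, -⟩, hxL⟩
                exact ⟨hLS, Finset.insert_subset hxL hAL⟩
              · rintro ⟨hLS, hins⟩
                rw [Finset.insert_subset_iff] at hins
                refine ⟨⟨⟨hLS, hins.2⟩, fun hcon => ?_⟩, hins.1⟩
                have hx2 : x ∈ ({p0, k} : Finset Ω) :=
                  hcon ▸ Finset.mem_inter.mpr ⟨hins.1, hxK₀⟩
                simp only [Finset.mem_insert, Finset.mem_singleton] at hx2
                tauto
            rw [hfeq, SS_lam5 hS hc5]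
          rw [Finset.sum_congr rfl hpt, Finset.sum_const, smul_eq_mul,
            Finset.card_sdiff_of_subset (by
              intro y hy
              simp only [Finset.mem_insert, Finset.mem_singleton] at hy
              rcases hy with rfl | rfl
              exacts [h0K, hkK₀]), hS.2.1 K₀ hK₀S,
            Finset.card_insert_of_notMem (by simp [hkne0.symm]), Finset.card_singleton]
        have hsum2 : ∑ L ∈ B, (L ∩ (K₀ \ {p0, k})).card = 6 := by
          rw [← SS_double_count (K₀ \ {p0, k}) B, hsum]
        have hsum3 : ∑ L ∈ B, (L ∩ (K₀ \ {p0, k})).card = 2 * B.card := by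
          have hpt : ∀ L ∈ B, (L ∩ (K₀ \ {p0, k})).card = 2 := by
            intro L hL
            have h4 := hB4 L hL
            simp only [hB, Finset.mem_filter] at hL
            obtain ⟨hsub, -⟩ := hsubA L hL.1
            have heq : L ∩ (K₀ \ {p0, k}) = (L ∩ K₀) \ {p0, k} := by
              ext y; simp [Finset.mem_sdiff]; tauto
            rw [heq, Finset.card_sdiff_of_subset hsub, h4,
              Finset.card_insert_of_notMem (by simp [hkne0.symm]), Finset.card_singleton]
          rw [Finset.sum_congr rfl hpt, Finset.sum_const, smul_eq_mul, mul_comm]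
        omega
      -- final: target = G \ B, card = 5 - 3 = 2
      have hsplit := Finset.card_filter_add_card_filter_not
        (s := G) (p := fun K => K ∩ K₀ ≠ {p0, k})
      have hfe2 : G.filter (fun K => ¬ K ∩ K₀ ≠ {p0, k})
          = S.filter (fun K => A ⊆ K ∧ K ∩ K₀ = {p0, k}) := by
        simp only [hG, Finset.filter_filter, not_not]
      rw [← hfe2]
      rw [← hB] at hsplit
      omega
    · rw [if_neg hk]
      rw [Finset.card_eq_zero, Finset.filter_eq_empty_iff]
      rintro K - ⟨hknot, -, hKK₀⟩
      apply hk
      have hkmem : k ∈ K ∩ K₀ := hKK₀ ▸ (by simp : k ∈ ({p0, k} : Finset Ω))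
      refine Finset.mem_erase.mpr ⟨?_, (Finset.mem_inter.mp hkmem).2⟩
      intro h
      exact hknot (by simp [h])
  rw [Finset.sum_congr rfl (fun k _ => hper k)]
  rw [Finset.sum_ite_mem, Finset.univ_inter, Finset.sum_const, smul_eq_mul,
    Finset.card_erase_of_mem h0K, hS.2.1 K₀ hK₀S]
end

section
/- Let S be a Steiner system S(5,8,24) on a 24-element set Ω, let ∞, 0, 1 ∈ Ω be distinct points, and let K₀ ∈ S be an octad with 0 ∈ K₀ and ∞ ∉ K₀, 1 ∉ K₀. Then the number of octads K ∈ S satisfying ∞ ∈ K, 0 ∈ K, 1 ∉ K and |K ∩ K₀| = 2 is exactly 28. -/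
open Finset

section DoubleCounting

variable {α : Type*} [DecidableEq α]

theorem sum_choose_card_inter (T : Finset (Finset α)) (B : Finset α) (i : ℕ) :
    ∑ K ∈ T, (#(K ∩ B)).choose i = ∑ A ∈ B.powersetCard i, #{K ∈ T | A ⊆ K} := by
  calc ∑ K ∈ T, (#(K ∩ B)).choose i = ∑ K ∈ T, #{A ∈ B.powersetCard i | A ⊆ K} := by
        refine sum_congr rfl fun K _ => ?_
        rw [← card_powersetCard]
        congr 1
        ext A
        simp only [mem_powersetCard, mem_filter, subset_inter_iff]
        tauto
    _ = ∑ A ∈ B.powersetCard i, #{K ∈ T | A ⊆ K} := by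
        simp only [card_filter]
        exact sum_comm

theorem sum_filter_subset_choose_card_inter (S : Finset (Finset α)) (P B : Finset α) {i m : ℕ}
    (hm : ∀ A ∈ B.powersetCard i, #{K ∈ S | P ∪ A ⊆ K} = m) :
    ∑ K ∈ S with P ⊆ K, (#(K ∩ B)).choose i = (#B).choose i * m := by
  rw [sum_choose_card_inter, ← card_powersetCard, ← smul_eq_mul, ← sum_const]
  refine sum_congr rfl fun A hA => ?_
  rw [filter_filter, ← hm A hA]
  simp only [union_subset_iff]

/-- The recursion `λⱼ (k - j) = (v - j) λⱼ₊₁` for the parameters of a design, from counting the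
pairs `(x, K)` with `x ∈ K \ A`. -/
theorem card_filter_subset_mul_sub [Fintype α] (S : Finset (Finset α)) {k m : ℕ}
    (hS : ∀ K ∈ S, #K = k) (A : Finset α)
    (hm : ∀ x ∉ A, #{K ∈ S | insert x A ⊆ K} = m) :
    #{K ∈ S | A ⊆ K} * (k - #A) = (Fintype.card α - #A) * m := by
  have hsingle : ∀ X ∈ Aᶜ.powersetCard 1, #{K ∈ S | A ∪ X ⊆ K} = m := by
    intro X hX
    obtain ⟨hXA, hX1⟩ := mem_powersetCard.1 hX
    obtain ⟨x, rfl⟩ := card_eq_one.1 hX1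
    rw [union_comm, ← insert_eq]
    exact hm x (by simpa using hXA)
  have hcount := sum_filter_subset_choose_card_inter S A Aᶜ hsingle
  rw [Nat.choose_one_right, card_compl] at hcount
  rw [← hcount, ← smul_eq_mul, ← sum_const]
  refine sum_congr rfl fun K hK => ?_
  obtain ⟨hKS, hAK⟩ := mem_filter.1 hK
  rw [Nat.choose_one_right, ← sdiff_eq_inter_compl, card_sdiff_of_subset hAK, hS K hKS]

end DoubleCounting

/-- `λⱼ`, the number of octads through a `j`-set, `j ≤ 5`. -/
def octadLambda : ℕ → ℕ
  | 0 => 759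
  | 1 => 253
  | 2 => 77
  | 3 => 21
  | 4 => 5
  | 5 => 1
  | _ => 0

namespace IsSteinerSystem_5_8_24

variable {Ω : Type*} [Fintype Ω] [DecidableEq Ω] {S : Finset (Finset Ω)}

theorem card_filter_subset (hS : IsSteinerSystem_5_8_24 S) {A : Finset Ω} (hA : #A ≤ 5) :
    #{K ∈ S | A ⊆ K} = octadLambda #A := by
  obtain ⟨n, hn⟩ : ∃ n, #A + n = 5 := ⟨5 - #A, by omega⟩
  induction n generalizing A with
  | zero =>
    obtain ⟨K, hK, huniq⟩ := hS.2.2 A hn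
    rw [Nat.add_zero] at hn
    rw [hn, octadLambda, card_eq_one]
    exact ⟨K, by ext L; simpa using ⟨huniq L, fun hLK => hLK ▸ hK⟩⟩
  | succ n ih =>
    have hstep := card_filter_subset_mul_sub S hS.2.1 A fun x hx => by
      have hxA := card_insert_of_notMem hx
      rw [ih (by omega) (by omega), hxA]
    have hlam : octadLambda #A * (8 - #A) = (24 - #A) * octadLambda (#A + 1) := by
      have hA4 : #A ≤ 4 := by omega
      interval_cases #A <;> rfl
    rw [hS.1, ← hlam] at hstep
    exact Nat.eq_of_mul_eq_mul_right (by omega) hstep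

theorem card_inter_le_four (hS : IsSteinerSystem_5_8_24 S) {K K₀ : Finset Ω} (hK : K ∈ S)
    (hK₀ : K₀ ∈ S) (hne : K ≠ K₀) : #(K ∩ K₀) ≤ 4 := by
  by_contra! h
  obtain ⟨A, hAKK₀, hA⟩ := exists_subset_card_eq (show 5 ≤ #(K ∩ K₀) by omega)
  obtain ⟨L, -, huniq⟩ := hS.2.2 A hA
  exact hne ((huniq K ⟨hK, hAKK₀.trans inter_subset_left⟩).trans
    (huniq K₀ ⟨hK₀, hAKK₀.trans inter_subset_right⟩).symm)

theorem choose_add_sum_erase_choose_card_inter (hS : IsSteinerSystem_5_8_24 S) {K₀ : Finset Ω}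
    (hK₀ : K₀ ∈ S) {j : ℕ} (hj : j ≤ 5) :
    (8).choose j + ∑ K ∈ S.erase K₀, (#(K ∩ K₀)).choose j = (8).choose j * octadLambda j := by
  have hcount := sum_filter_subset_choose_card_inter S ∅ K₀ (i := j) fun A hA => by
    obtain ⟨-, hAj⟩ := mem_powersetCard.1 hA
    rw [empty_union, hS.card_filter_subset (by omega), hAj]
  rw [filter_true_of_mem fun K _ => empty_subset K, hS.2.1 K₀ hK₀] at hcount
  rw [← hcount, ← add_sum_erase S _ hK₀, inter_self, hS.2.1 K₀ hK₀]

theorem card_inter_eq_zero_or_two_or_four (hS : IsSteinerSystem_5_8_24 S) {K K₀ : Finset Ω}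
    (hK : K ∈ S) (hK₀ : K₀ ∈ S) (hne : K ≠ K₀) :
    #(K ∩ K₀) = 0 ∨ #(K ∩ K₀) = 2 ∨ #(K ∩ K₀) = 4 := by
  set n : ℕ → ℕ := fun i => #{L ∈ S.erase K₀ | #(L ∩ K₀) = i}
  have hmaps : ∀ L ∈ S.erase K₀, #(L ∩ K₀) ∈ range 5 := fun L hL => by
    rw [mem_range, Nat.lt_succ_iff]
    exact hS.card_inter_le_four (mem_of_mem_erase hL) hK₀ (ne_of_mem_erase hL)
  have moment : ∀ j ≤ 5,
      (8).choose j + ∑ i ∈ range 5, n i * i.choose j = (8).choose j * octadLambda j := by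
    intro j hj
    rw [← hS.choose_add_sum_erase_choose_card_inter hK₀ hj, ← sum_fiberwise_of_maps_to hmaps]
    congr 1
    refine sum_congr rfl fun i _ => ?_
    rw [sum_congr rfl fun L hL => by rw [(mem_filter.1 hL).2], sum_const, smul_eq_mul]
  have e1 := moment 1 (by norm_num)
  have e2 := moment 2 (by norm_num)
  have e3 := moment 3 (by norm_num)
  have e4 := moment 4 (by norm_num)
  simp only [sum_range_succ, sum_range_zero] at e1 e2 e3 e4
  norm_num [octadLambda, Nat.choose] at e1 e2 e3 e4
  have hpos : 0 < n #(K ∩ K₀) := card_pos.2 ⟨K, mem_filter.2 ⟨mem_erase.2 ⟨hne, hK⟩, rfl⟩⟩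
  have hle := hS.card_inter_le_four hK hK₀ hne
  interval_cases h : #(K ∩ K₀) <;> omega

theorem two_mul_card_filter_card_inter_eq_two_add (hS : IsSteinerSystem_5_8_24 S)
    {K₀ P : Finset Ω} {p0 : Ω} (hK₀ : K₀ ∈ S) (hp0 : p0 ∈ K₀) (hP : Disjoint P K₀)
    (hPne : P.Nonempty) (hPcard : #P ≤ 3) :
    2 * #{K ∈ S | insert p0 P ⊆ K ∧ #(K ∩ K₀) = 2} + 7 * octadLambda (#P + 2)
      = 3 * octadLambda (#P + 1) := by
  have hcardP : #(insert p0 P) = #P + 1 := card_insert_of_notMem (disjoint_right.1 hP hp0)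
  have hthrough : #{K ∈ S | insert p0 P ⊆ K} = octadLambda (#P + 1) := by
    rw [hS.card_filter_subset (by omega), hcardP]
  have hincidence : ∑ K ∈ S with insert p0 P ⊆ K, #(K ∩ K₀.erase p0)
      = 7 * octadLambda (#P + 2) := by
    have hcount := sum_filter_subset_choose_card_inter S (insert p0 P) (K₀.erase p0) (i := 1)
      fun A hA => by
        obtain ⟨hAK₀, hA⟩ := mem_powersetCard.1 hA
        have hdisj : Disjoint (insert p0 P) A := by
          rw [disjoint_insert_left]
          exact ⟨fun h => (mem_erase.1 (hAK₀ h)).1 rfl,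
            hP.mono_right (hAK₀.trans (erase_subset p0 K₀))⟩
        rw [hS.card_filter_subset (by rw [card_union_of_disjoint hdisj]; omega),
          card_union_of_disjoint hdisj, hcardP, hA]
    simpa only [Nat.choose_one_right, card_erase_of_mem hp0, hS.2.1 K₀ hK₀] using hcount
  have hmeet : ∀ K ∈ S, insert p0 P ⊆ K →
      #(K ∩ K₀.erase p0) = #(K ∩ K₀) - 1 ∧ (#(K ∩ K₀) = 2 ∨ #(K ∩ K₀) = 4) := by
    intro K hK hPK
    obtain ⟨q, hq⟩ := hPne
    have hp0K : p0 ∈ K ∩ K₀ := mem_inter.2 ⟨hPK (mem_insert_self p0 P), hp0⟩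
    have hne : K ≠ K₀ := fun h => disjoint_left.1 hP hq (h ▸ hPK (mem_insert_of_mem hq))
    refine ⟨by rw [inter_erase, card_erase_of_mem hp0K], ?_⟩
    have := card_pos.2 ⟨p0, hp0K⟩
    rcases hS.card_inter_eq_zero_or_two_or_four hK hK₀ hne with h | h | h <;> omega
  calc 2 * #{K ∈ S | insert p0 P ⊆ K ∧ #(K ∩ K₀) = 2} + 7 * octadLambda (#P + 2)
      = ∑ K ∈ S with insert p0 P ⊆ K,
          (2 * (if #(K ∩ K₀) = 2 then 1 else 0) + #(K ∩ K₀.erase p0)) := by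
        rw [sum_add_distrib, ← mul_sum, ← card_filter, filter_filter, hincidence]
    _ = ∑ K ∈ S with insert p0 P ⊆ K, 3 := by
        refine sum_congr rfl fun K hK => ?_
        obtain ⟨hKS, hPK⟩ := mem_filter.1 hK
        obtain ⟨hcard, h | h⟩ := hmeet K hKS hPK <;> simp [hcard, h]
    _ = 3 * octadLambda (#P + 1) := by rw [sum_const, smul_eq_mul, hthrough, mul_comm]

end IsSteinerSystem_5_8_24

theorem count_octads_E7_p_general {Ω : Type*} [Fintype Ω] [DecidableEq Ω]
    (S : Finset (Finset Ω)) (hS : IsSteinerSystem_5_8_24 S)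
    (pinf p0 p1 : Ω) (hinf1 : pinf ≠ p1)
    (K₀ : Finset Ω) (hK₀S : K₀ ∈ S)
    (h0K : p0 ∈ K₀) (hinfK : pinf ∉ K₀) (h1K : p1 ∉ K₀) :
    (S.filter fun K => pinf ∈ K ∧ p0 ∈ K ∧ p1 ∉ K ∧ (K ∩ K₀).card = 2).card = 28 := by
  have hthrough₂ := hS.two_mul_card_filter_card_inter_eq_two_add hK₀S h0K
    (disjoint_singleton_left.2 hinfK) (singleton_nonempty pinf) (by simp)
  have hthrough₃ := hS.two_mul_card_filter_card_inter_eq_two_add hK₀S h0K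
    (P := {pinf, p1}) (by simp [hinfK, h1K]) (insert_nonempty _ _) (card_le_two.trans (by norm_num))
  rw [card_singleton] at hthrough₂
  rw [card_pair hinf1] at hthrough₃
  norm_num [octadLambda] at hthrough₂ hthrough₃
  have hsplit : #{K ∈ S | insert p0 {pinf} ⊆ K ∧ #(K ∩ K₀) = 2}
      = #{K ∈ S | insert p0 {pinf, p1} ⊆ K ∧ #(K ∩ K₀) = 2}
        + #{K ∈ S | pinf ∈ K ∧ p0 ∈ K ∧ p1 ∉ K ∧ #(K ∩ K₀) = 2} := by
    rw [← card_filter_add_card_filter_not (p := fun K => p1 ∈ K), filter_filter, filter_filter]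
    congr 2 <;> ext K <;> simp only [mem_filter, insert_subset_iff, singleton_subset_iff] <;> tauto
  omega

theorem count_octads_E7_p {Ω : Type*} [Fintype Ω] [DecidableEq Ω]
    (S : Finset (Finset Ω)) (hS : IsSteinerSystem_5_8_24 S)
    (pinf p0 p1 : Ω) (h01 : p0 ≠ p1) (hinf0 : pinf ≠ p0) (hinf1 : pinf ≠ p1)
    (K₀ : Finset Ω) (hK₀S : K₀ ∈ S)
    (h0K : p0 ∈ K₀) (hinfK : pinf ∉ K₀) (h1K : p1 ∉ K₀) :
    (S.filter fun K => pinf ∈ K ∧ p0 ∈ K ∧ p1 ∉ K ∧ (K ∩ K₀).card = 2).card = 28 :=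
  count_octads_E7_p_general S hS pinf p0 p1 hinf1 K₀ hK₀S h0K hinfK h1K
end

section
/- Let S be a Steiner system S(5,8,24) on a 24-element set Ω, let ∞, 0, 1 ∈ Ω be distinct points, let K₀ ∈ S be an octad with 0 ∈ K₀ and ∞ ∉ K₀, 1 ∉ K₀, and let F = {K ∈ S : ∞ ∈ K, 0 ∈ K, 1 ∉ K, |K ∩ K₀| = 4}. Then every point k ∈ Ω with k ∉ K₀ and k ∉ {∞, 1} lies in exactly 6 of the members of F. -/
open Finset

/-- Double counting: pairs (B, L) with B an r-subset of X contained in L ⊇ A. -/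
private lemma dc0 {Ω : Type*} [DecidableEq Ω] (S : Finset (Finset Ω)) (A X : Finset Ω) (r : ℕ) :
    ∑ B ∈ X.powersetCard r, (S.filter fun L => A ∪ B ⊆ L).card
      = ∑ L ∈ S.filter (fun L => A ⊆ L), ((L ∩ X).powersetCard r).card := by
  simp only [card_filter]
  rw [Finset.sum_comm, Finset.sum_filter]
  refine Finset.sum_congr rfl fun L _ => ?_
  by_cases hA : A ⊆ L
  · rw [if_pos hA, ← card_filter]
    congr 1
    ext B
    simp only [mem_filter, mem_powersetCard, union_subset_iff, subset_inter_iff]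
    tauto
  · rw [if_neg hA]
    refine Finset.sum_eq_zero fun B hB => ?_
    rw [if_neg fun h => hA (subset_union_left.trans h)]

private lemma key0 {Ω : Type*} [DecidableEq Ω] (S : Finset (Finset Ω)) (A X : Finset Ω)
    (hdis : ∀ a ∈ A, a ∉ X) (r c : ℕ)
    (hc : ∀ A' : Finset Ω, A'.card = A.card + r → (S.filter fun L => A' ⊆ L).card = c) :
    ∑ L ∈ S.filter (fun L => A ⊆ L), ((L ∩ X).powersetCard r).card = (X.card.choose r) * c := by
  rw [← dc0]
  have h1 : ∀ B ∈ X.powersetCard r, (S.filter fun L => A ∪ B ⊆ L).card = c := by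
    intro B hB
    rw [mem_powersetCard] at hB
    apply hc
    rw [card_union_of_disjoint (disjoint_left.mpr fun a ha hb => hdis a ha (hB.1 hb)), hB.2]
  rw [Finset.sum_congr rfl h1, sum_const, smul_eq_mul, card_powersetCard]

private lemma lam5' {Ω : Type*} [DecidableEq Ω] (S : Finset (Finset Ω))
    (hu : ∀ A : Finset Ω, A.card = 5 → ∃! K, K ∈ S ∧ A ⊆ K) :
    ∀ A : Finset Ω, A.card = 5 → (S.filter fun L => A ⊆ L).card = 1 := by
  intro A hA
  obtain ⟨K, hK, huq⟩ := hu A hA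
  rw [Finset.card_eq_one]
  refine ⟨K, ?_⟩
  ext L
  simp only [mem_filter, mem_singleton]
  constructor
  · intro h; exact huq L h
  · rintro rfl; exact ⟨hK.1, hK.2⟩

private lemma lam_step {Ω : Type*} [Fintype Ω] [DecidableEq Ω] (S : Finset (Finset Ω))
    (hΩ : Fintype.card Ω = 24) (hoct : ∀ K ∈ S, K.card = 8) {j c : ℕ}
    (hc : ∀ A : Finset Ω, A.card = j + 1 → (S.filter fun L => A ⊆ L).card = c) :
    ∀ A : Finset Ω, A.card = j → (S.filter fun L => A ⊆ L).card * (8 - j) = (24 - j) * c := by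
  intro A hA
  have h := key0 S A Aᶜ (fun a ha => by simp [ha]) 1 c (fun A' hA' => hc A' (by omega))
  rw [card_compl, hΩ, hA, Nat.choose_one_right] at h
  have h2 : ∑ L ∈ S.filter (fun L => A ⊆ L), ((L ∩ Aᶜ).powersetCard 1).card
      = (S.filter fun L => A ⊆ L).card * (8 - j) := by
    have e : ∀ L ∈ S.filter (fun L => A ⊆ L), ((L ∩ Aᶜ).powersetCard 1).card = 8 - j := by
      intro L hL
      obtain ⟨hLS, hAL⟩ := mem_filter.mp hL
      have ec : L ∩ Aᶜ = L \ A := by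
        ext a; simp [mem_sdiff, mem_inter, mem_compl]
      rw [card_powersetCard, Nat.choose_one_right, ec, card_sdiff_of_subset hAL, hoct L hLS, hA]
    rw [Finset.sum_congr rfl e, sum_const, smul_eq_mul]
  rw [← h2, h]

private lemma lams {Ω : Type*} [Fintype Ω] [DecidableEq Ω] (S : Finset (Finset Ω))
    (hS : IsSteinerSystem_5_8_24 S) :
    (∀ A : Finset Ω, A.card = 5 → (S.filter fun L => A ⊆ L).card = 1) ∧
    (∀ A : Finset Ω, A.card = 4 → (S.filter fun L => A ⊆ L).card = 5) ∧
    (∀ A : Finset Ω, A.card = 3 → (S.filter fun L => A ⊆ L).card = 21) ∧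
    (∀ A : Finset Ω, A.card = 2 → (S.filter fun L => A ⊆ L).card = 77) ∧
    (∀ A : Finset Ω, A.card = 1 → (S.filter fun L => A ⊆ L).card = 253) := by
  obtain ⟨hΩ, hoct, hu⟩ := hS
  have l5 := lam5' S hu
  have l4 : ∀ A : Finset Ω, A.card = 4 → (S.filter fun L => A ⊆ L).card = 5 := by
    intro A hA
    have := lam_step S hΩ hoct l5 A hA
    omega
  have l3 : ∀ A : Finset Ω, A.card = 3 → (S.filter fun L => A ⊆ L).card = 21 := by
    intro A hA
    have := lam_step S hΩ hoct l4 A hA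
    omega
  have l2 : ∀ A : Finset Ω, A.card = 2 → (S.filter fun L => A ⊆ L).card = 77 := by
    intro A hA
    have := lam_step S hΩ hoct l3 A hA
    omega
  have l1 : ∀ A : Finset Ω, A.card = 1 → (S.filter fun L => A ⊆ L).card = 253 := by
    intro A hA
    have := lam_step S hΩ hoct l2 A hA
    omega
  exact ⟨l5, l4, l3, l2, l1⟩

private lemma big5 {Ω : Type*} [DecidableEq Ω] (S : Finset (Finset Ω))
    (hu : ∀ A : Finset Ω, A.card = 5 → ∃! K, K ∈ S ∧ A ⊆ K) :
    ∀ K ∈ S, ∀ K' ∈ S, 5 ≤ (K ∩ K').card → K = K' := by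
  intro K hK K' hK' h5
  obtain ⟨B, hBsub, hB5⟩ := Finset.exists_subset_card_eq h5
  obtain ⟨L, -, huq⟩ := hu B hB5
  rw [huq K ⟨hK, hBsub.trans inter_subset_left⟩, huq K' ⟨hK', hBsub.trans inter_subset_right⟩]

private lemma card_inter_erase' {Ω : Type*} [DecidableEq Ω] (L K₀ : Finset Ω) (p : Ω)
    (hp : p ∈ K₀) (hpL : p ∈ L) :
    (L ∩ K₀).card = (L ∩ K₀.erase p).card + 1 := by
  have h : L ∩ K₀ = insert p (L ∩ K₀.erase p) := by
    ext a
    simp only [mem_inter, mem_insert, mem_erase]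
    constructor
    · rintro ⟨haL, haK⟩
      by_cases h : a = p
      · exact Or.inl h
      · exact Or.inr ⟨haL, h, haK⟩
    · rintro (rfl | ⟨haL, -, haK⟩)
      · exact ⟨hpL, hp⟩
      · exact ⟨haL, haK⟩
  rw [h, card_insert_of_notMem fun hmem => (notMem_erase p K₀) (mem_of_mem_inter_right hmem)]

private lemma no3 {Ω : Type*} [Fintype Ω] [DecidableEq Ω] (S : Finset (Finset Ω))
    (hS : IsSteinerSystem_5_8_24 S) (K₀ : Finset Ω) (hK₀S : K₀ ∈ S) :
    ∀ K ∈ S, K ≠ K₀ → (K ∩ K₀).card ≠ 3 := by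
  obtain ⟨l5, l4, l3, -, -⟩ := lams S hS
  obtain ⟨hΩ, hoct, hu⟩ := hS
  intro K hK hne h3
  have hAK : K ∩ K₀ ⊆ K := inter_subset_left
  have hAK₀ : K ∩ K₀ ⊆ K₀ := inter_subset_right
  have hX5 : (K₀ \ (K ∩ K₀)).card = 5 := by
    rw [card_sdiff_of_subset hAK₀, hoct K₀ hK₀S, h3]
  have h := key0 S (K ∩ K₀) (K₀ \ (K ∩ K₀)) (fun a ha => by simp [mem_sdiff, ha, hAK₀ ha, hAK ha]) 1 5
    (fun A' hA' => l4 A' (by omega))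
  rw [hX5, Nat.choose_one_right] at h
  -- h : ∑ over T = 5 * 5 = 25.  Now bound the sum above by 24.
  set T := S.filter (fun L => K ∩ K₀ ⊆ L) with hT
  have hTcard : T.card = 21 := l3 _ h3
  have hKT : K ∈ T := mem_filter.mpr ⟨hK, hAK⟩
  have hK₀T : K₀ ∈ T := mem_filter.mpr ⟨hK₀S, hAK₀⟩
  have hKe : K ∈ T.erase K₀ := mem_erase.mpr ⟨hne, hKT⟩
  rw [← Finset.add_sum_erase _ _ hK₀T, ← Finset.add_sum_erase _ _ hKe] at h
  have e1 : ((K₀ ∩ (K₀ \ (K ∩ K₀))).powersetCard 1).card = 5 := by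
    rw [inter_eq_right.mpr sdiff_subset, card_powersetCard, hX5, Nat.choose_one_right]
  have e2 : ((K ∩ (K₀ \ (K ∩ K₀))).powersetCard 1).card = 0 := by
    have hempty : K ∩ (K₀ \ (K ∩ K₀)) = ∅ := by
      ext a
      simp only [mem_inter, mem_sdiff, notMem_empty, iff_false]
      tauto
    rw [hempty, card_powersetCard, card_empty]
    rfl
  have e3 : ∀ L ∈ (T.erase K₀).erase K, ((L ∩ (K₀ \ (K ∩ K₀))).powersetCard 1).card ≤ 1 := by
    intro L hL
    have hLK₀ : L ≠ K₀ := (mem_erase.mp (mem_of_mem_erase hL)).1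
    obtain ⟨hLS, hAL⟩ := mem_filter.mp (mem_of_mem_erase (mem_of_mem_erase hL))
    rw [card_powersetCard, Nat.choose_one_right]
    by_contra hgt
    push_neg at hgt
    have hsub : (K ∩ K₀) ∪ (L ∩ (K₀ \ (K ∩ K₀))) ⊆ L ∩ K₀ := by
      intro a ha
      rcases mem_union.mp ha with h' | h'
      · exact mem_inter.mpr ⟨hAL h', hAK₀ h'⟩
      · simp only [mem_inter, mem_sdiff] at h' ⊢
        exact ⟨h'.1, h'.2.1⟩
    have hdisj : Disjoint (K ∩ K₀) (L ∩ (K₀ \ (K ∩ K₀))) := by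
      rw [disjoint_left]
      intro a ha ha'
      simp only [mem_inter, mem_sdiff, mem_inter] at ha'
      exact ha'.2.2 (mem_inter.mp ha)
    have h5 : 5 ≤ (L ∩ K₀).card := by
      calc 5 ≤ (K ∩ K₀).card + (L ∩ (K₀ \ (K ∩ K₀))).card := by omega
        _ = ((K ∩ K₀) ∪ (L ∩ (K₀ \ (K ∩ K₀)))).card := (card_union_of_disjoint hdisj).symm
        _ ≤ (L ∩ K₀).card := card_le_card hsub
    exact hLK₀ (big5 S hu L hLS K₀ hK₀S h5)
  have hb := Finset.sum_le_card_nsmul ((T.erase K₀).erase K) _ 1 e3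
  rw [smul_eq_mul, mul_one, card_erase_of_mem hKe, card_erase_of_mem hK₀T, hTcard] at hb
  rw [e1, e2] at h
  omega

private lemma no1 {Ω : Type*} [Fintype Ω] [DecidableEq Ω] (S : Finset (Finset Ω))
    (hS : IsSteinerSystem_5_8_24 S) (K₀ : Finset Ω) (hK₀S : K₀ ∈ S) (p : Ω) (hp : p ∈ K₀) :
    ∀ L ∈ S, p ∈ L → (L ∩ K₀).card ≠ 1 := by
  obtain ⟨l5, l4, l3, l2, l1⟩ := lams S hS
  obtain ⟨hΩ, hoct, hu⟩ := hS
  intro L₁ hL₁S hpL₁ hc1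
  set X := K₀.erase p with hXdef
  have hX7 : X.card = 7 := by rw [hXdef, card_erase_of_mem hp, hoct K₀ hK₀S]
  have hpX : p ∉ X := notMem_erase p K₀
  set T := S.filter (fun L => ({p} : Finset Ω) ⊆ L) with hTdef
  have hT253 : T.card = 253 := l1 _ (card_singleton p)
  have hkey : ∀ r c : ℕ, (∀ A' : Finset Ω, A'.card = 1 + r → (S.filter fun L => A' ⊆ L).card = c) →
      ∑ L ∈ T, ((L ∩ X).powersetCard r).card = (Nat.choose 7 r) * c := by
    intro r c hc
    have h := key0 S {p} X (by simp [hpX]) r c (fun A' hA' => hc A' (by rwa [card_singleton] at hA'))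
    rw [hX7] at h
    exact h
  have s1 : ∑ L ∈ T, (L ∩ X).card = 539 := by
    have := hkey 1 77 (fun A' hA' => l2 A' (by omega))
    simp only [card_powersetCard, Nat.choose_one_right] at this
    rw [this]
  have s2 : ∑ L ∈ T, ((L ∩ X).card.choose 2) = 441 := by
    have := hkey 2 21 (fun A' hA' => l3 A' (by omega))
    simp only [card_powersetCard] at this
    rw [this]
    decide
  have s3 : ∑ L ∈ T, ((L ∩ X).card.choose 3) = 175 := by
    have := hkey 3 5 (fun A' hA' => l4 A' (by omega))
    simp only [card_powersetCard] at this
    rw [this]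
    decide
  have hins : ∀ L ∈ T, (L ∩ K₀).card = (L ∩ X).card + 1 := by
    intro L hL
    obtain ⟨hLS, hpL⟩ := mem_filter.mp hL
    exact card_inter_erase' L K₀ p hp (hpL (mem_singleton_self p))
  have hd : ∀ L ∈ T, (L ∩ X).card = 0 ∨ (L ∩ X).card = 1 ∨ (L ∩ X).card = 3 ∨ (L ∩ X).card = 7 := by
    intro L hL
    obtain ⟨hLS, hpL'⟩ := mem_filter.mp hL
    have hpL : p ∈ L := hpL' (mem_singleton_self p)
    have hdc := hins L hL
    rcases eq_or_ne L K₀ with rfl | hne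
    · have : L ∩ L = L := inter_self L
      rw [this, hoct L hK₀S] at hdc
      omega
    · have h3 := no3 S ⟨hΩ, hoct, hu⟩ K₀ hK₀S L hLS hne
      have h5 : (L ∩ K₀).card ≤ 4 := by
        by_contra hcon
        push_neg at hcon
        exact hne (big5 S hu L hLS K₀ hK₀S (by omega))
      have hge1 : 1 ≤ (L ∩ K₀).card := card_pos.mpr ⟨p, mem_inter.mpr ⟨hpL, hp⟩⟩
      omega
  have hL₁T : L₁ ∈ T := mem_filter.mpr ⟨hL₁S, singleton_subset_iff.mpr hpL₁⟩
  have hL₁d : (L₁ ∩ X).card = 0 := by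
    have := hins L₁ hL₁T
    omega
  have hf : ∑ L ∈ T, (6 * ((L ∩ X).card.choose 3) + 21 * (L ∩ X).card) = 12369 := by
    rw [sum_add_distrib, ← mul_sum, ← mul_sum, s3, s1]
    norm_num
  have hg : ∑ L ∈ T, (16 * ((L ∩ X).card.choose 2) + 21) = 12369 := by
    rw [sum_add_distrib, ← mul_sum, s2, sum_const, smul_eq_mul, hT253]
    norm_num
  have hle : ∑ L ∈ T.erase L₁, (6 * ((L ∩ X).card.choose 3) + 21 * (L ∩ X).card)
      ≤ ∑ L ∈ T.erase L₁, (16 * ((L ∩ X).card.choose 2) + 21) := by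
    refine Finset.sum_le_sum fun L hL => ?_
    rcases hd L (mem_of_mem_erase hL) with h | h | h | h <;> rw [h] <;> decide
  rw [← Finset.add_sum_erase _ _ hL₁T] at hf hg
  rw [hL₁d] at hf hg
  norm_num at hf hg
  omega

theorem point_outside_K0_in_six_octads {Ω : Type*} [Fintype Ω] [DecidableEq Ω]
    (S : Finset (Finset Ω)) (hS : IsSteinerSystem_5_8_24 S)
    (pinf p0 p1 : Ω) (h01 : p0 ≠ p1) (hinf0 : pinf ≠ p0) (hinf1 : pinf ≠ p1)
    (K₀ : Finset Ω) (hK₀S : K₀ ∈ S)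
    (h0K : p0 ∈ K₀) (hinfK : pinf ∉ K₀) (h1K : p1 ∉ K₀)
    (F : Finset (Finset Ω))
    (hF : F = S.filter fun K => pinf ∈ K ∧ p0 ∈ K ∧ p1 ∉ K ∧ (K ∩ K₀).card = 4) :
    ∀ k : Ω, k ∉ K₀ → k ≠ pinf → k ≠ p1 →
      (F.filter fun K => k ∈ K).card = 6 := by
  intro k hkK₀ hkinf hk1
  obtain ⟨l5, l4, l3, l2, l1⟩ := lams S hS
  obtain ⟨hΩ, hoct, hu⟩ := hS
  have hk0 : k ≠ p0 := fun h => hkK₀ (h ▸ h0K)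
  have hX7 : (K₀.erase p0).card = 7 := by rw [card_erase_of_mem h0K, hoct K₀ hK₀S]
  have hp0X : p0 ∉ K₀.erase p0 := notMem_erase p0 K₀
  have hA3 : ({pinf, p0, k} : Finset Ω).card = 3 := by
    rw [card_insert_of_notMem (by
        simp only [mem_insert, mem_singleton]
        push_neg
        exact ⟨hinf0, fun h => hkinf h.symm⟩),
      card_insert_of_notMem (by
        simp only [mem_singleton]
        exact fun h => hk0 h.symm),
      card_singleton]
  have hQ4 : (insert p1 ({pinf, p0, k} : Finset Ω)).card = 4 := by
    rw [card_insert_of_notMem (by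
        simp only [mem_insert, mem_singleton]
        push_neg
        exact ⟨fun h => hinf1 h.symm, fun h => h01 h.symm, fun h => hk1 h.symm⟩), hA3]
  have hdisA3 : ∀ a ∈ ({pinf, p0, k} : Finset Ω), a ∉ K₀.erase p0 := by
    intro a ha hax
    have haK : a ∈ K₀ := mem_of_mem_erase hax
    simp only [mem_insert, mem_singleton] at ha
    rcases ha with rfl | rfl | rfl
    · exact hinfK haK
    · exact hp0X hax
    · exact hkK₀ haK
  have hdisQ : ∀ a ∈ insert p1 ({pinf, p0, k} : Finset Ω), a ∉ K₀.erase p0 := by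
    intro a ha hax
    rcases mem_insert.mp ha with rfl | ha'
    · exact h1K (mem_of_mem_erase hax)
    · exact hdisA3 a ha' hax
  -- counting sums
  have keyT : ∑ L ∈ S.filter (fun L => ({pinf, p0, k} : Finset Ω) ⊆ L),
      ((L ∩ K₀.erase p0).card.choose 2) = 21 := by
    have h := key0 S {pinf, p0, k} (K₀.erase p0) hdisA3 2 1 (fun A' hA' => l5 A' (by omega))
    rw [hX7] at h
    simp only [card_powersetCard] at h
    rw [h]
    decide
  have keyT' : ∑ L ∈ S.filter (fun L => insert p1 ({pinf, p0, k} : Finset Ω) ⊆ L),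
      (L ∩ K₀.erase p0).card = 7 := by
    have h := key0 S (insert p1 {pinf, p0, k}) (K₀.erase p0) hdisQ 1 1
      (fun A' hA' => l5 A' (by omega))
    rw [hX7] at h
    simp only [card_powersetCard, Nat.choose_one_right] at h
    rw [h]
  -- classification
  have hclass : ∀ L ∈ S, ({pinf, p0, k} : Finset Ω) ⊆ L →
      ((L ∩ K₀).card = 1 ∨ (L ∩ K₀).card = 2 ∨ (L ∩ K₀).card = 4) ∧
      (L ∩ K₀).card = (L ∩ K₀.erase p0).card + 1 := by
    intro L hLS hAL
    have hpinfL : pinf ∈ L := hAL (mem_insert_self _ _)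
    have hp0L : p0 ∈ L := hAL (by simp)
    have hne : L ≠ K₀ := fun h => hinfK (h ▸ hpinfL)
    have hins := card_inter_erase' L K₀ p0 h0K hp0L
    have h3 := no3 S ⟨hΩ, hoct, hu⟩ K₀ hK₀S L hLS hne
    have h5 : (L ∩ K₀).card ≤ 4 := by
      by_contra hcon
      push_neg at hcon
      exact hne (big5 S hu L hLS K₀ hK₀S (by omega))
    have hge1 : 1 ≤ (L ∩ K₀).card := card_pos.mpr ⟨p0, mem_inter.mpr ⟨hp0L, h0K⟩⟩
    exact ⟨by omega, hins⟩
  -- n4 = 7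
  have e4 : ∀ L ∈ S.filter (fun L => ({pinf, p0, k} : Finset Ω) ⊆ L),
      ((L ∩ K₀.erase p0).card.choose 2) = (if (L ∩ K₀).card = 4 then 1 else 0) * 3 := by
    intro L hL
    obtain ⟨hLS, hAL⟩ := mem_filter.mp hL
    obtain ⟨hc, hins⟩ := hclass L hLS hAL
    rcases hc with h | h | h
    · have hd : (L ∩ K₀.erase p0).card = 0 := by omega
      rw [hd, if_neg (by omega)]
      decide
    · have hd : (L ∩ K₀.erase p0).card = 1 := by omega
      rw [hd, if_neg (by omega)]
      decide
    · have hd : (L ∩ K₀.erase p0).card = 3 := by omega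
      rw [hd, if_pos h]
      decide
  have n4 : ((S.filter (fun L => ({pinf, p0, k} : Finset Ω) ⊆ L)).filter
      (fun L => (L ∩ K₀).card = 4)).card = 7 := by
    rw [Finset.sum_congr rfl e4, ← sum_mul, ← card_filter] at keyT
    omega
  -- n4' = 1
  have e4' : ∀ L ∈ S.filter (fun L => insert p1 ({pinf, p0, k} : Finset Ω) ⊆ L),
      (L ∩ K₀.erase p0).card = (if (L ∩ K₀).card = 4 then 1 else 0) * 2 + 1 := by
    intro L hL
    obtain ⟨hLS, hQL⟩ := mem_filter.mp hL
    have hAL : ({pinf, p0, k} : Finset Ω) ⊆ L := (subset_insert p1 _).trans hQL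
    obtain ⟨hc, hins⟩ := hclass L hLS hAL
    have hp0L : p0 ∈ L := hAL (by simp)
    have hne1 := no1 S ⟨hΩ, hoct, hu⟩ K₀ hK₀S p0 h0K L hLS hp0L
    rcases hc with h | h | h
    · exact absurd h hne1
    · rw [if_neg (by omega)]
      omega
    · rw [if_pos h]
      omega
  have n4' : ((S.filter (fun L => insert p1 ({pinf, p0, k} : Finset Ω) ⊆ L)).filter
      (fun L => (L ∩ K₀).card = 4)).card = 1 := by
    rw [Finset.sum_congr rfl e4', sum_add_distrib, ← sum_mul, ← card_filter, sum_const,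
      smul_eq_mul, mul_one, l4 _ hQ4] at keyT'
    omega
  -- final assembly
  have hsub : ((S.filter (fun L => insert p1 ({pinf, p0, k} : Finset Ω) ⊆ L)).filter
        (fun L => (L ∩ K₀).card = 4))
      ⊆ ((S.filter (fun L => ({pinf, p0, k} : Finset Ω) ⊆ L)).filter
        (fun L => (L ∩ K₀).card = 4)) := by
    intro L hL
    simp only [mem_filter] at hL ⊢
    exact ⟨⟨hL.1.1, (subset_insert p1 _).trans hL.1.2⟩, hL.2⟩
  have hFeq : F.filter (fun K => k ∈ K)
      = ((S.filter (fun L => ({pinf, p0, k} : Finset Ω) ⊆ L)).filter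
          (fun L => (L ∩ K₀).card = 4))
        \ ((S.filter (fun L => insert p1 ({pinf, p0, k} : Finset Ω) ⊆ L)).filter
          (fun L => (L ∩ K₀).card = 4)) := by
    rw [hF]
    ext L
    simp only [mem_filter, mem_sdiff, insert_subset_iff, singleton_subset_iff]
    tauto
  rw [hFeq, card_sdiff_of_subset hsub, n4, n4']
end

section
/- Let S be a Steiner system S(5,8,24) on a 24-element set Ω, let ∞, 0, 1 ∈ Ω be distinct points, let K₀ ∈ S be an octad with 0 ∈ K₀ and ∞ ∉ K₀, 1 ∉ K₀, and let F = {K ∈ S : ∞ ∈ K, 0 ∈ K, 1 ∉ K, |K ∩ K₀| = 4}. Then for every octad K ∈ S with ∞ ∈ K, 0 ∈ K, 1 ∉ K and |K ∩ K₀| = 2, exactly 7 members K' of F satisfy |K ∩ K'| = 2, and the remaining 21 members of F satisfy |K ∩ K'| = 4. -/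
open Finset in
def lamS {Ω : Type*} [DecidableEq Ω] (S : Finset (Finset Ω)) (P : Finset Ω) : ℕ :=
  (S.filter fun K => P ⊆ K).card

section
variable {Ω : Type*} [Fintype Ω] [DecidableEq Ω] (S : Finset (Finset Ω))

open Finset

/-- core double count -/
lemma dc (P B : Finset Ω) :
    ∑ K ∈ S.filter (fun K => P ⊆ K), ((K ∩ B) \ P).card
      = ∑ y ∈ B \ P, lamS S (insert y P) := by
  have h1 : ∀ K : Finset Ω, (K ∩ B) \ P = (B \ P).filter (fun y => y ∈ K) := by
    intro K; ext y; simp only [mem_sdiff, mem_inter, mem_filter]; tauto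
  calc ∑ K ∈ S.filter (fun K => P ⊆ K), ((K ∩ B) \ P).card
      = ∑ K ∈ S.filter (fun K => P ⊆ K), ∑ y ∈ B \ P, (if y ∈ K then 1 else 0) := by
        refine Finset.sum_congr rfl fun K _ => ?_
        rw [h1 K, Finset.card_filter]
    _ = ∑ y ∈ B \ P, ∑ K ∈ S.filter (fun K => P ⊆ K), (if y ∈ K then 1 else 0) :=
        Finset.sum_comm
    _ = ∑ y ∈ B \ P, lamS S (insert y P) := by
        refine Finset.sum_congr rfl fun y _ => ?_
        rw [← Finset.card_filter, Finset.filter_filter, lamS]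
        congr 1
        apply Finset.filter_congr
        intro K _
        simp [Finset.insert_subset_iff, and_comm]
end

set_option linter.unusedSectionVars false

section
variable {Ω : Type*} [Fintype Ω] [DecidableEq Ω] {S : Finset (Finset Ω)}
  (hS : IsSteinerSystem_5_8_24 S)

open Finset

include hS

lemma lam5 (P : Finset Ω) (hP : P.card = 5) : lamS S P = 1 := by
  obtain ⟨K, ⟨hKS, hPK⟩, huniq⟩ := hS.2.2 P hP
  rw [lamS, Finset.card_eq_one]
  refine ⟨K, ?_⟩
  ext L
  simp only [mem_filter, mem_singleton]
  constructor
  · rintro ⟨hL, hPL⟩; exact huniq L ⟨hL, hPL⟩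
  · rintro rfl; exact ⟨hKS, hPK⟩

lemma lam_step_s10 {j c : ℕ}
    (hc : ∀ Q : Finset Ω, Q.card = j + 1 → lamS S Q = c)
    (P : Finset Ω) (hP : P.card = j) :
    (8 - j) * lamS S P = (24 - j) * c := by
  have h := dc S P (univ : Finset Ω)
  have hL : ∑ K ∈ S.filter (fun K => P ⊆ K), ((K ∩ univ) \ P).card
      = (8 - j) * lamS S P := by
    have : ∀ K ∈ S.filter (fun K => P ⊆ K), ((K ∩ univ) \ P).card = 8 - j := by
      intro K hK
      simp only [mem_filter] at hK
      rw [Finset.inter_univ, Finset.card_sdiff_of_subset hK.2, hS.2.1 K hK.1, hP]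
    rw [Finset.sum_congr rfl this, Finset.sum_const, smul_eq_mul, lamS, mul_comm]
  have hcard : ((univ : Finset Ω) \ P).card = 24 - j := by
    rw [Finset.card_sdiff_of_subset (Finset.subset_univ P), Finset.card_univ, hS.1, hP]
  have hR : ∑ y ∈ (univ : Finset Ω) \ P, lamS S (insert y P) = (24 - j) * c := by
    have : ∀ y ∈ (univ : Finset Ω) \ P, lamS S (insert y P) = c := by
      intro y hy
      simp only [mem_sdiff] at hy
      exact hc _ (by rw [Finset.card_insert_of_notMem hy.2, hP])
    rw [Finset.sum_congr rfl this, Finset.sum_const, smul_eq_mul, hcard]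
  rw [← hL, h, hR]

end

section
variable {Ω : Type*} [Fintype Ω] [DecidableEq Ω] {S : Finset (Finset Ω)}
  (hS : IsSteinerSystem_5_8_24 S)
open Finset
include hS

lemma lam4 (P : Finset Ω) (hP : P.card = 4) : lamS S P = 5 := by
  have := lam_step_s10 hS (fun Q hQ => lam5 hS Q hQ) P hP; omega

lemma lam3 (P : Finset Ω) (hP : P.card = 3) : lamS S P = 21 := by
  have := lam_step_s10 hS (fun Q hQ => lam4 hS Q hQ) P hP; omega

lemma lam2 (P : Finset Ω) (hP : P.card = 2) : lamS S P = 77 := by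
  have := lam_step_s10 hS (fun Q hQ => lam3 hS Q hQ) P hP; omega

lemma lam1 (P : Finset Ω) (hP : P.card = 1) : lamS S P = 253 := by
  have := lam_step_s10 hS (fun Q hQ => lam2 hS Q hQ) P hP; omega

lemma inter_le_four {K B : Finset Ω} (hK : K ∈ S) (hB : B ∈ S) (hne : K ≠ B) :
    (K ∩ B).card ≤ 4 := by
  by_contra hgt
  push_neg at hgt
  obtain ⟨T, hT, hTcard⟩ := Finset.exists_subset_card_eq (show 5 ≤ (K ∩ B).card from hgt)
  obtain ⟨L, -, huniq⟩ := hS.2.2 T hTcard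
  have h1 : K = L := huniq K ⟨hK, hT.trans Finset.inter_subset_left⟩
  have h2 : B = L := huniq B ⟨hB, hT.trans Finset.inter_subset_right⟩
  exact hne (h1.trans h2.symm)

end

section
variable {Ω : Type*} [Fintype Ω] [DecidableEq Ω] {S : Finset (Finset Ω)}
  (hS : IsSteinerSystem_5_8_24 S)
open Finset

lemma moment {B : Finset Ω} (hB : B ∈ S) {j c : ℕ}
    (hc : ∀ Q : Finset Ω, Q.card = j → lamS S Q = c) (hS8 : B.card = 8) :
    ∑ K ∈ S.erase B, ((K ∩ B).card.choose j) = (Nat.choose 8 j) * (c - 1) := by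
  have h1 : ∀ K ∈ S.erase B, ((K ∩ B).card.choose j)
      = ∑ T ∈ B.powersetCard j, (if T ⊆ K then 1 else 0) := by
    intro K _
    rw [← Finset.card_filter]
    have : (B.powersetCard j).filter (fun T => T ⊆ K) = (K ∩ B).powersetCard j := by
      ext T
      simp only [mem_filter, Finset.mem_powersetCard, Finset.subset_inter_iff]
      tauto
    rw [this, Finset.card_powersetCard]
  rw [Finset.sum_congr rfl h1, Finset.sum_comm]
  have h2 : ∀ T ∈ B.powersetCard j,
      (∑ K ∈ S.erase B, if T ⊆ K then 1 else 0) = c - 1 := by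
    intro T hT
    rw [Finset.mem_powersetCard] at hT
    rw [← Finset.card_filter, Finset.filter_erase, Finset.card_erase_of_mem
      (Finset.mem_filter.2 ⟨hB, hT.1⟩), ← lamS, hc T hT.2]
  rw [Finset.sum_congr rfl h2, Finset.sum_const, smul_eq_mul, Finset.card_powersetCard, hS8]

include hS in
lemma parity {B K : Finset Ω} (hB : B ∈ S) (hK : K ∈ S) (hne : K ≠ B) :
    (K ∩ B).card = 0 ∨ (K ∩ B).card = 2 ∨ (K ∩ B).card = 4 := by
  have hS8 : B.card = 8 := hS.2.1 B hB
  have m1 := moment hB (fun Q hQ => lam1 hS Q hQ) hS8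
  have m2 := moment hB (fun Q hQ => lam2 hS Q hQ) hS8
  have m3 := moment hB (fun Q hQ => lam3 hS Q hQ) hS8
  have m4 := moment hB (fun Q hQ => lam4 hS Q hQ) hS8
  have hle : ∀ L ∈ S.erase B, (L ∩ B).card ≤ 4 := by
    intro L hL
    rw [Finset.mem_erase] at hL
    exact inter_le_four hS hL.2 hB hL.1
  have hpt : ∀ L ∈ S.erase B,
      6 * ((L ∩ B).card.choose 2) + 24 * ((L ∩ B).card.choose 4)
        ≤ 3 * ((L ∩ B).card.choose 1) + 12 * ((L ∩ B).card.choose 3) := by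
    intro L hL
    have := hle L hL
    interval_cases h : (L ∩ B).card <;> decide
  have hsum : ∑ L ∈ S.erase B,
      (6 * ((L ∩ B).card.choose 2) + 24 * ((L ∩ B).card.choose 4))
      = ∑ L ∈ S.erase B,
      (3 * ((L ∩ B).card.choose 1) + 12 * ((L ∩ B).card.choose 3)) := by
    rw [Finset.sum_add_distrib, Finset.sum_add_distrib, ← Finset.mul_sum, ← Finset.mul_sum,
      ← Finset.mul_sum, ← Finset.mul_sum, m1, m2, m3, m4]
    decide
  have heach := (Finset.sum_eq_sum_iff_of_le hpt).1 hsum K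
      (Finset.mem_erase.2 ⟨hne, hK⟩)
  have hc4 := inter_le_four hS hK hB hne
  interval_cases h : (K ∩ B).card <;> revert heach <;> decide

end

section
variable {Ω : Type*} [Fintype Ω] [DecidableEq Ω] {S : Finset (Finset Ω)}
  (hS : IsSteinerSystem_5_8_24 S)
open Finset

lemma sum_card_inter (𝒦 : Finset (Finset Ω)) (K : Finset Ω) :
    ∑ K' ∈ 𝒦, (K ∩ K').card = ∑ x ∈ K, (𝒦.filter (fun K' => x ∈ K')).card := by
  have h1 : ∀ K' ∈ 𝒦, (K ∩ K').card = ∑ x ∈ K, (if x ∈ K' then 1 else 0) := by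
    intro K' _
    have h : K ∩ K' = K.filter (fun x => x ∈ K') := by
      ext x; simp [Finset.mem_inter]
    rw [h, Finset.card_filter]
  rw [Finset.sum_congr rfl h1, Finset.sum_comm]
  exact Finset.sum_congr rfl fun x _ => (Finset.card_filter _ _).symm

lemma sum_interB (B P : Finset Ω) :
    ∑ K ∈ S.filter (fun K => P ⊆ K), (K ∩ B).card
      = (P ∩ B).card * lamS S P + ∑ y ∈ B \ P, lamS S (insert y P) := by
  have key : ∀ K ∈ S.filter (fun K => P ⊆ K),
      (K ∩ B).card = (P ∩ B).card + ((K ∩ B) \ P).card := by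
    intro K hK
    rw [Finset.mem_filter] at hK
    have hsub : P ∩ B ⊆ K ∩ B := Finset.inter_subset_inter hK.2 (Finset.Subset.refl B)
    have he : (K ∩ B) \ P = (K ∩ B) \ (P ∩ B) := by
      ext x; simp only [Finset.mem_sdiff, Finset.mem_inter]; tauto
    have hle := Finset.card_le_card hsub
    rw [he, Finset.card_sdiff_of_subset hsub]
    omega
  rw [Finset.sum_congr rfl key, Finset.sum_add_distrib, Finset.sum_const, smul_eq_mul,
    dc S P B, lamS, mul_comm]

include hS in
lemma inter_two_or_four {B P : Finset Ω} (hB : B ∈ S) {p q : Ω}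
    (hp : p ∈ P) (hpB : p ∈ B) (hq : q ∈ P) (hqB : q ∉ B) :
    ∀ K ∈ S.filter (fun K => P ⊆ K), (K ∩ B).card = 2 ∨ (K ∩ B).card = 4 := by
  intro K hK
  rw [Finset.mem_filter] at hK
  have hne : K ≠ B := fun h => hqB (h ▸ hK.2 hq)
  have hpar := parity hS hB hK.1 hne
  have hpos : 0 < (K ∩ B).card :=
    Finset.card_pos.2 ⟨p, Finset.mem_inter.2 ⟨hK.2 hp, hpB⟩⟩
  omega

lemma count4_split (𝒦 : Finset (Finset Ω)) (f : Finset Ω → ℕ)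
    (hval : ∀ K ∈ 𝒦, f K = 2 ∨ f K = 4) :
    ∑ K ∈ 𝒦, f K = 2 * 𝒦.card + 2 * (𝒦.filter (fun K => f K = 4)).card := by
  have hsplit := Finset.sum_filter_add_sum_filter_not 𝒦 (fun K => f K = 4) f
  have h4 : ∑ K ∈ 𝒦.filter (fun K => f K = 4), f K
      = 4 * (𝒦.filter (fun K => f K = 4)).card := by
    rw [Finset.sum_congr rfl (fun K hK => (Finset.mem_filter.1 hK).2),
      Finset.sum_const, smul_eq_mul, mul_comm]
  have h2 : ∑ K ∈ 𝒦.filter (fun K => ¬ f K = 4), f K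
      = 2 * (𝒦.filter (fun K => ¬ f K = 4)).card := by
    have : ∀ K ∈ 𝒦.filter (fun K => ¬ f K = 4), f K = 2 := by
      intro K hK
      rw [Finset.mem_filter] at hK
      rcases hval K hK.1 with h | h
      · exact h
      · exact absurd h hK.2
    rw [Finset.sum_congr rfl this, Finset.sum_const, smul_eq_mul, mul_comm]
  have hcard := Finset.card_filter_add_card_filter_not
    (s := 𝒦) (p := fun K => f K = 4)
  omega

include hS in
/-- the master counting equation -/
lemma cnt4_eq {B P : Finset Ω} (hB : B ∈ S) {p q : Ω}
    (hp : p ∈ P) (hpB : p ∈ B) (hq : q ∈ P) (hqB : q ∉ B)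
    {j t N M : ℕ} (hj : P.card = j) (ht : (P ∩ B).card = t)
    (hN : lamS S P = N) (hM : ∀ Q : Finset Ω, Q.card = j + 1 → lamS S Q = M) :
    2 * N + 2 * (S.filter (fun K => P ⊆ K ∧ (K ∩ B).card = 4)).card
      = t * N + (8 - t) * M := by
  have hB8 : B.card = 8 := hS.2.1 B hB
  have hsum := sum_interB (S := S) B P
  have hsplit := count4_split (S.filter (fun K => P ⊆ K)) (fun K => (K ∩ B).card)
    (inter_two_or_four hS hB hp hpB hq hqB)
  have hRS : ∑ y ∈ B \ P, lamS S (insert y P) = (8 - t) * M := by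
    have hconst : ∀ y ∈ B \ P, lamS S (insert y P) = M := by
      intro y hy
      rw [Finset.mem_sdiff] at hy
      exact hM _ (by rw [Finset.card_insert_of_notMem hy.2, hj])
    have hcard : (B \ P).card = 8 - t := by
      have he : B \ P = B \ (P ∩ B) := by
        ext x; simp only [Finset.mem_sdiff, Finset.mem_inter]; tauto
      rw [he, Finset.card_sdiff_of_subset Finset.inter_subset_right, hB8, ht]
    rw [Finset.sum_congr rfl hconst, Finset.sum_const, smul_eq_mul, hcard]
  simp only [Finset.filter_filter] at hsplit
  rw [hsum, hRS, ht] at hsplit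
  rw [hN] at hsplit
  rw [lamS] at hN
  rw [hN] at hsplit
  omega

end


theorem E7_root_meets_seven_nodal_classes {Ω : Type*} [Fintype Ω] [DecidableEq Ω]
    (S : Finset (Finset Ω)) (hS : IsSteinerSystem_5_8_24 S)
    (pinf p0 p1 : Ω) (h01 : p0 ≠ p1) (hinf0 : pinf ≠ p0) (hinf1 : pinf ≠ p1)
    (K₀ : Finset Ω) (hK₀S : K₀ ∈ S)
    (h0K : p0 ∈ K₀) (hinfK : pinf ∉ K₀) (h1K : p1 ∉ K₀)
    (F : Finset (Finset Ω))
    (hF : F = S.filter fun K => pinf ∈ K ∧ p0 ∈ K ∧ p1 ∉ K ∧ (K ∩ K₀).card = 4) :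
    ∀ K ∈ S, pinf ∈ K → p0 ∈ K → p1 ∉ K → (K ∩ K₀).card = 2 →
      (F.filter fun K' => (K ∩ K').card = 2).card = 7 ∧
      (F.filter fun K' => (K ∩ K').card = 4).card = 21 := by
  intro K hKS hKinf hK0 hK1 hK2
  -- the second point of K ∩ K₀
  obtain ⟨a, ha0, hKK₀⟩ : ∃ a, a ≠ p0 ∧ K ∩ K₀ = {p0, a} := by
    obtain ⟨u, v, huv, hpair⟩ := Finset.card_eq_two.1 hK2
    have hp0 : p0 ∈ K ∩ K₀ := Finset.mem_inter.2 ⟨hK0, h0K⟩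
    rw [hpair, Finset.mem_insert, Finset.mem_singleton] at hp0
    rcases hp0 with rfl | rfl
    · exact ⟨v, fun h => huv h.symm, hpair⟩
    · exact ⟨u, fun h => huv h, by rw [hpair, Finset.pair_comm]⟩
  have haK : a ∈ K := by
    have : a ∈ K ∩ K₀ := by rw [hKK₀]; simp
    exact (Finset.mem_inter.1 this).1
  have haK₀ : a ∈ K₀ := by
    have : a ∈ K ∩ K₀ := by rw [hKK₀]; simp
    exact (Finset.mem_inter.1 this).2
  have hainf : pinf ≠ a := fun h => hinfK (h ▸ haK₀)
  have hap1 : a ≠ p1 := fun h => h1K (h ▸ haK₀)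
  -- splitting off the p1 ∉ K' condition
  have hg : ∀ x : Ω,
      (F.filter (fun K' => x ∈ K')).card
        + (S.filter (fun K' => ({pinf, p0, x, p1} : Finset Ω) ⊆ K' ∧ (K' ∩ K₀).card = 4)).card
        = (S.filter (fun K' => ({pinf, p0, x} : Finset Ω) ⊆ K' ∧ (K' ∩ K₀).card = 4)).card := by
    intro x
    have h1 : F.filter (fun K' => x ∈ K')
        = (S.filter (fun K' => ({pinf, p0, x} : Finset Ω) ⊆ K' ∧ (K' ∩ K₀).card = 4)).filter
            (fun K' => ¬ p1 ∈ K') := by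
      rw [hF, Finset.filter_filter, Finset.filter_filter]
      apply Finset.filter_congr
      intro K' _
      simp only [Finset.insert_subset_iff, Finset.singleton_subset_iff]
      tauto
    have h2 : (S.filter (fun K' => ({pinf, p0, x} : Finset Ω) ⊆ K' ∧ (K' ∩ K₀).card = 4)).filter
            (fun K' => p1 ∈ K')
        = S.filter (fun K' => ({pinf, p0, x, p1} : Finset Ω) ⊆ K' ∧ (K' ∩ K₀).card = 4) := by
      rw [Finset.filter_filter]
      apply Finset.filter_congr
      intro K' _
      simp only [Finset.insert_subset_iff, Finset.singleton_subset_iff]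
      tauto
    have h3 := Finset.card_filter_add_card_filter_not
      (s := S.filter (fun K' => ({pinf, p0, x} : Finset Ω) ⊆ K' ∧ (K' ∩ K₀).card = 4))
      (p := fun K' => p1 ∈ K')
    rw [h2] at h3
    rw [h1]
    omega
  have hFsplit : F.card
        + (S.filter (fun K' => ({pinf, p0, p1} : Finset Ω) ⊆ K' ∧ (K' ∩ K₀).card = 4)).card
        = (S.filter (fun K' => ({pinf, p0} : Finset Ω) ⊆ K' ∧ (K' ∩ K₀).card = 4)).card := by
    have h1 : F = (S.filter (fun K' => ({pinf, p0} : Finset Ω) ⊆ K' ∧ (K' ∩ K₀).card = 4)).filter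
            (fun K' => ¬ p1 ∈ K') := by
      rw [hF, Finset.filter_filter]
      apply Finset.filter_congr
      intro K' _
      simp only [Finset.insert_subset_iff, Finset.singleton_subset_iff]
      tauto
    have h2 : (S.filter (fun K' => ({pinf, p0} : Finset Ω) ⊆ K' ∧ (K' ∩ K₀).card = 4)).filter
            (fun K' => p1 ∈ K')
        = S.filter (fun K' => ({pinf, p0, p1} : Finset Ω) ⊆ K' ∧ (K' ∩ K₀).card = 4) := by
      rw [Finset.filter_filter]
      apply Finset.filter_congr
      intro K' _
      simp only [Finset.insert_subset_iff, Finset.singleton_subset_iff]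
      tauto
    have h3 := Finset.card_filter_add_card_filter_not
      (s := S.filter (fun K' => ({pinf, p0} : Finset Ω) ⊆ K' ∧ (K' ∩ K₀).card = 4))
      (p := fun K' => p1 ∈ K')
    rw [h2] at h3
    rw [h1]
    omega
  -- numeric values of the various counts
  have hj2 : ({pinf, p0} : Finset Ω).card = 2 := Finset.card_pair hinf0
  have ht2 : (({pinf, p0} : Finset Ω) ∩ K₀).card = 1 := by
    rw [Finset.insert_inter_of_notMem hinfK, Finset.singleton_inter_of_mem h0K]
    exact Finset.card_singleton p0
  have e2 := cnt4_eq hS hK₀S (Finset.mem_insert_of_mem (Finset.mem_singleton_self p0)) h0K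
    (Finset.mem_insert_self pinf _) hinfK hj2 ht2 (lam2 hS _ hj2) (fun Q hQ => lam3 hS Q hQ)
  have hj3p1 : ({pinf, p0, p1} : Finset Ω).card = 3 := by
    rw [Finset.card_insert_of_notMem (by simp [hinf0, hinf1]),
      Finset.card_insert_of_notMem (by simp [h01])]
    rfl
  have ht3p1 : (({pinf, p0, p1} : Finset Ω) ∩ K₀).card = 1 := by
    rw [Finset.insert_inter_of_notMem hinfK, Finset.insert_inter_of_mem h0K,
      Finset.singleton_inter_of_notMem h1K]
    rfl
  have e3p1 := cnt4_eq hS hK₀S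
    (Finset.mem_insert_of_mem (Finset.mem_insert_self p0 _)) h0K
    (Finset.mem_insert_self pinf _) hinfK hj3p1 ht3p1 (lam3 hS _ hj3p1)
    (fun Q hQ => lam4 hS Q hQ)
  have hFcard : F.card = 28 := by omega
  -- the value of (F.filter (x ∈ ·)).card for x outside K₀ (and ≠ pinf, p0, p1)
  have hgx : ∀ x : Ω, x ∉ K₀ → x ≠ pinf → x ≠ p0 → x ≠ p1 →
      (F.filter (fun K' => x ∈ K')).card = 6 := by
    intro x hxK₀ hx1 hx2 hx3
    have hj3 : ({pinf, p0, x} : Finset Ω).card = 3 := by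
      rw [Finset.card_insert_of_notMem (by simp [hinf0]; exact fun h => hx1 h.symm),
        Finset.card_insert_of_notMem (by simp; exact fun h => hx2 h.symm)]
      rfl
    have ht3 : (({pinf, p0, x} : Finset Ω) ∩ K₀).card = 1 := by
      rw [Finset.insert_inter_of_notMem hinfK, Finset.insert_inter_of_mem h0K,
        Finset.singleton_inter_of_notMem hxK₀]
      rfl
    have e3 := cnt4_eq hS hK₀S
      (Finset.mem_insert_of_mem (Finset.mem_insert_self p0 _)) h0K
      (Finset.mem_insert_self pinf _) hinfK hj3 ht3 (lam3 hS _ hj3)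
      (fun Q hQ => lam4 hS Q hQ)
    have hj4 : ({pinf, p0, x, p1} : Finset Ω).card = 4 := by
      rw [Finset.card_insert_of_notMem
          (by simp [hinf0, hinf1]; exact fun h => hx1 h.symm),
        Finset.card_insert_of_notMem (by simp [h01]; exact fun h => hx2 h.symm),
        Finset.card_insert_of_notMem (by simp [hx3])]
      rfl
    have ht4 : (({pinf, p0, x, p1} : Finset Ω) ∩ K₀).card = 1 := by
      rw [Finset.insert_inter_of_notMem hinfK, Finset.insert_inter_of_mem h0K,
        Finset.insert_inter_of_notMem hxK₀, Finset.singleton_inter_of_notMem h1K]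
      rfl
    have e4 := cnt4_eq hS hK₀S
      (Finset.mem_insert_of_mem (Finset.mem_insert_self p0 _)) h0K
      (Finset.mem_insert_self pinf _) hinfK hj4 ht4 (lam4 hS _ hj4)
      (fun Q hQ => lam5 hS Q hQ)
    have := hg x
    omega
  -- the value for x = a
  have hga : (F.filter (fun K' => a ∈ K')).card = 12 := by
    have hj3 : ({pinf, p0, a} : Finset Ω).card = 3 := by
      rw [Finset.card_insert_of_notMem (by simp [hinf0, hainf]),
        Finset.card_insert_of_notMem (by simp; exact fun h => ha0 h.symm)]
      rfl
    have ht3 : (({pinf, p0, a} : Finset Ω) ∩ K₀).card = 2 := by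
      rw [Finset.insert_inter_of_notMem hinfK, Finset.insert_inter_of_mem h0K,
        Finset.singleton_inter_of_mem haK₀]
      exact Finset.card_pair (fun h => ha0 h.symm)
    have e3 := cnt4_eq hS hK₀S
      (Finset.mem_insert_of_mem (Finset.mem_insert_self p0 _)) h0K
      (Finset.mem_insert_self pinf _) hinfK hj3 ht3 (lam3 hS _ hj3)
      (fun Q hQ => lam4 hS Q hQ)
    have hj4 : ({pinf, p0, a, p1} : Finset Ω).card = 4 := by
      rw [Finset.card_insert_of_notMem (by simp [hinf0, hainf, hinf1]),
        Finset.card_insert_of_notMem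
          (by simp [h01]; exact fun h => ha0 h.symm),
        Finset.card_insert_of_notMem (by simp [hap1])]
      rfl
    have ht4 : (({pinf, p0, a, p1} : Finset Ω) ∩ K₀).card = 2 := by
      rw [Finset.insert_inter_of_notMem hinfK, Finset.insert_inter_of_mem h0K,
        Finset.insert_inter_of_mem haK₀, Finset.singleton_inter_of_notMem h1K]
      rw [Finset.insert_empty]
      exact Finset.card_pair (fun h => ha0 h.symm)
    have e4 := cnt4_eq hS hK₀S
      (Finset.mem_insert_of_mem (Finset.mem_insert_self p0 _)) h0K
      (Finset.mem_insert_self pinf _) hinfK hj4 ht4 (lam4 hS _ hj4)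
      (fun Q hQ => lam5 hS Q hQ)
    have := hg a
    omega
  -- summing over the points of K
  have hT : ({pinf, p0, a} : Finset Ω) ⊆ K := by
    intro y hy
    simp only [Finset.mem_insert, Finset.mem_singleton] at hy
    rcases hy with rfl | rfl | rfl
    · exact hKinf
    · exact hK0
    · exact haK
  have hsum := sum_card_inter F K
  have hsumT : ∑ x ∈ ({pinf, p0, a} : Finset Ω), (F.filter (fun K' => x ∈ K')).card
      = 28 + 28 + 12 := by
    rw [Finset.sum_insert (by simp [hinf0, hainf]),
      Finset.sum_insert (by simp; exact fun h => ha0 h.symm),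
      Finset.sum_singleton]
    have hfinf : F.filter (fun K' => pinf ∈ K') = F := by
      apply Finset.filter_true_of_mem
      intro K' hK'
      rw [hF, Finset.mem_filter] at hK'
      exact hK'.2.1
    have hf0 : F.filter (fun K' => p0 ∈ K') = F := by
      apply Finset.filter_true_of_mem
      intro K' hK'
      rw [hF, Finset.mem_filter] at hK'
      exact hK'.2.2.1
    rw [hfinf, hf0, hga, hFcard]
    omega
  have hsumrest : ∑ x ∈ K \ ({pinf, p0, a} : Finset Ω),
      (F.filter (fun K' => x ∈ K')).card = 30 := by
    have hconst : ∀ x ∈ K \ ({pinf, p0, a} : Finset Ω),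
        (F.filter (fun K' => x ∈ K')).card = 6 := by
      intro x hx
      rw [Finset.mem_sdiff, Finset.mem_insert, Finset.mem_insert,
        Finset.mem_singleton] at hx
      push_neg at hx
      obtain ⟨hxK, hx1, hx2, hx3⟩ := hx
      have hxK₀ : x ∉ K₀ := by
        intro hmem
        have : x ∈ K ∩ K₀ := Finset.mem_inter.2 ⟨hxK, hmem⟩
        rw [hKK₀, Finset.mem_insert, Finset.mem_singleton] at this
        tauto
      have hxp1 : x ≠ p1 := fun h => hK1 (h ▸ hxK)
      exact hgx x hxK₀ hx1 hx2 hxp1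
    rw [Finset.sum_congr rfl hconst, Finset.sum_const, smul_eq_mul]
    have : (K \ ({pinf, p0, a} : Finset Ω)).card = 5 := by
      rw [Finset.card_sdiff_of_subset hT, hS.2.1 K hKS]
      rw [Finset.card_insert_of_notMem (by simp [hinf0, hainf]),
        Finset.card_insert_of_notMem (by simp; exact fun h => ha0 h.symm),
        Finset.card_singleton]
    rw [this]
  have htotal : ∑ K' ∈ F, (K ∩ K').card = 98 := by
    rw [hsum, ← Finset.sum_sdiff hT, hsumT, hsumrest]
  -- each member of F meets K in 2 or 4 points
  have hval : ∀ K' ∈ F, (K ∩ K').card = 2 ∨ (K ∩ K').card = 4 := by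
    intro K' hK'
    rw [hF, Finset.mem_filter] at hK'
    obtain ⟨hK'S, hK'inf, hK'0, hK'1, hK'4⟩ := hK'
    have hne : K ≠ K' := by
      intro h
      rw [← h] at hK'4
      omega
    have hpar := parity hS hK'S hKS hne
    have hpos : 0 < (K ∩ K').card :=
      Finset.card_pos.2 ⟨p0, Finset.mem_inter.2 ⟨hK0, hK'0⟩⟩
    omega
  have hsplit := count4_split F (fun K' => (K ∩ K').card) hval
  have hG4 : (F.filter (fun K' => (K ∩ K').card = 4)).card = 21 := by
    beta_reduce at hsplit
    rw [htotal, hFcard] at hsplit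
    omega
  refine ⟨?_, hG4⟩
  have hG2eq : F.filter (fun K' => (K ∩ K').card = 2)
      = F.filter (fun K' => ¬ (K ∩ K').card = 4) := by
    apply Finset.filter_congr
    intro K' hK'
    have := hval K' hK'
    constructor
    · intro h; omega
    · intro h; omega
  have h3 := Finset.card_filter_add_card_filter_not
    (s := F) (p := fun K' => (K ∩ K').card = 4)
  rw [hG2eq]
  omega
end

section
/- Let S be a Steiner system S(5,8,24) on a 24-element set Ω, let ∞, 0, 1 ∈ Ω be distinct points, let K₀ ∈ S be an octad with 0 ∈ K₀ and ∞ ∉ K₀, 1 ∉ K₀, and let F = {K ∈ S : ∞ ∈ K, 0 ∈ K, 1 ∉ K, |K ∩ K₀| = 4}. Then for every K ∈ F, exactly 3 of the other 27 members K' of F satisfy |K ∩ K'| = 2 (and the remaining 24 satisfy |K ∩ K'| = 4). In other words, the graph on F with adjacency |K ∩ K'| = 2 (Coxeter's graph) is 3-regular on 28 vertices. -/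
/-!
Every member of `F` contains `∞` and `0`, and distinct octads meet in at most four points and
never in three, so a member `K' ≠ K` meets the six further points of `K` in two points or none,
according as `|K ∩ K'|` is 4 or 2. Through each of these six points pass 12 members of `F` if the
point lies in `K₀` and 6 otherwise, and three of them lie in `K₀`; counting incidences gives
`3 · 11 + 3 · 5 = 48 = 2 · 24`, so 24 members meet `K` in four points and the other `27 - 24 = 3`
in two. All these numbers come from counting octads through a few given points that meet `K₀` in
four points, by double counting against the 5-subsets they contain.
-/

open Finset

section

variable {Ω : Type*} [DecidableEq Ω]

def octadsMeetingInFour (S : Finset (Finset Ω)) (K₀ A : Finset Ω) : Finset (Finset Ω) :=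
  {K ∈ S | A ⊆ K ∧ #(K ∩ K₀) = 4}

variable {S : Finset (Finset Ω)} {K₀ A : Finset Ω}

theorem filter_mem_octadsMeetingInFour (x : Ω) :
    {K ∈ octadsMeetingInFour S K₀ A | x ∈ K} = octadsMeetingInFour S K₀ (insert x A) := by
  ext K
  simp only [octadsMeetingInFour, mem_filter, insert_subset_iff]
  tauto

theorem card_filter_notMem_octadsMeetingInFour (x : Ω) :
    #{K ∈ octadsMeetingInFour S K₀ A | x ∉ K} =
      #(octadsMeetingInFour S K₀ A) - #(octadsMeetingInFour S K₀ (insert x A)) := by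
  have := card_filter_add_card_filter_not (s := octadsMeetingInFour S K₀ A) (x ∈ ·)
  rw [filter_mem_octadsMeetingInFour] at this
  omega

namespace IsSteinerSystem_5_8_24

variable [Fintype Ω]

theorem card_filter_superset_of_card_eq_five (hS : IsSteinerSystem_5_8_24 S)
    (hA : #A = 5) : #{K ∈ S | A ⊆ K} = 1 := by
  obtain ⟨K, hK, huniq⟩ := hS.2.2 A hA
  refine card_eq_one.2 ⟨K, ?_⟩
  ext L
  simp only [mem_filter, mem_singleton]
  exact ⟨huniq L, fun h => h ▸ hK⟩

theorem card_filter_superset_mul_eq_of_insert (hS : IsSteinerSystem_5_8_24 S) {v : ℕ}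
    (hv : ∀ x ∉ A, #{K ∈ S | insert x A ⊆ K} = v) :
    (24 - #A) * v = #{K ∈ S | A ⊆ K} * (8 - #A) := by
  rw [← hS.1, ← card_compl]
  refine card_mul_eq_card_mul (fun x K => x ∈ K) (fun x hx => ?_) (fun K hK => ?_)
  · rw [← hv x (mem_compl.1 hx), bipartiteAbove, filter_filter]
    simp only [insert_subset_iff, and_comm]
  · obtain ⟨hKS, hAK⟩ := mem_filter.1 hK
    rw [← hS.2.1 K hKS, ← card_sdiff_of_subset hAK, bipartiteBelow]
    congr 1
    ext x
    simp only [mem_filter, mem_compl, mem_sdiff, and_comm]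

theorem card_filter_superset_of_card_eq_four (hS : IsSteinerSystem_5_8_24 S)
    (hA : #A = 4) : #{K ∈ S | A ⊆ K} = 5 := by
  have h := hS.card_filter_superset_mul_eq_of_insert (A := A) fun x hx =>
    hS.card_filter_superset_of_card_eq_five (by rw [card_insert_of_notMem hx, hA])
  rw [hA] at h
  omega

theorem card_filter_superset_of_card_eq_three (hS : IsSteinerSystem_5_8_24 S)
    (hA : #A = 3) : #{K ∈ S | A ⊆ K} = 21 := by
  have h := hS.card_filter_superset_mul_eq_of_insert (A := A) fun x hx =>
    hS.card_filter_superset_of_card_eq_four (by rw [card_insert_of_notMem hx, hA])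
  rw [hA] at h
  omega

variable {K B : Finset Ω}

theorem card_inter_le_four_s11 (hS : IsSteinerSystem_5_8_24 S) (hK : K ∈ S) (hB : B ∈ S)
    (hKB : K ≠ B) : #(K ∩ B) ≤ 4 := by
  by_contra! h
  obtain ⟨A, hA, hA5⟩ := exists_subset_card_eq h
  obtain ⟨W, -, huniq⟩ := hS.2.2 A hA5
  exact hKB <| (huniq K ⟨hK, hA.trans inter_subset_left⟩).trans
    (huniq B ⟨hB, hA.trans inter_subset_right⟩).symm

/-- Through the three common points pass 20 octads other than `B`; the five points of `B` outside
them account for 20 incidences, but each of the 19 octads other than `K` meets them at most once. -/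
theorem card_inter_ne_three (hS : IsSteinerSystem_5_8_24 S) (hK : K ∈ S) (hB : B ∈ S)
    (hKB : K ≠ B) : #(K ∩ B) ≠ 3 := by
  intro hX
  set X := K ∩ B
  have hXB : X ⊆ B := inter_subset_right
  set T := ({L ∈ S | X ⊆ L}.erase B).erase K
  have hT : #T = 19 := by
    rw [card_erase_of_mem, card_erase_of_mem, hS.card_filter_superset_of_card_eq_three hX]
    · simp [hB, hXB]
    · simp [hK, hKB, X]
  have h := card_mul_le_card_mul (s := B \ X) (t := T) (m := 4) (n := 1) (fun y L => y ∈ L)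
    (fun y hy => ?_) (fun L hL => ?_)
  · rw [card_sdiff_of_subset hXB, hS.2.1 B hB, hX, hT] at h
    omega
  · obtain ⟨hyB, hyX⟩ := mem_sdiff.1 hy
    have hyK : y ∉ K := fun hyK => hyX (mem_inter.2 ⟨hyK, hyB⟩)
    have h5 := hS.card_filter_superset_of_card_eq_four (A := insert y X)
      (by rw [card_insert_of_notMem hyX, hX])
    have hsub : {L ∈ S | insert y X ⊆ L}.erase B ⊆ T.bipartiteAbove (fun y L => y ∈ L) y := by
      intro L hL
      simp only [mem_erase, mem_filter, insert_subset_iff] at hL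
      simp only [bipartiteAbove, T, mem_filter, mem_erase]
      exact ⟨⟨fun h => hyK (h ▸ hL.2.2.1), hL.1, hL.2.1, hL.2.2.2⟩, hL.2.2.1⟩
    have := card_le_card hsub
    rw [card_erase_of_mem (by simp [hB, hyB, hXB, insert_subset_iff]), h5] at this
    exact this
  · simp only [T, mem_erase, mem_filter] at hL
    obtain ⟨-, hLB, hLS, hXL⟩ := hL
    have hsub : (B \ X).bipartiteBelow (fun y L => y ∈ L) L ⊆ (L ∩ B) \ X := by
      intro y hy
      simp only [bipartiteBelow, mem_filter, mem_sdiff] at hy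
      simp only [mem_sdiff, mem_inter]
      exact ⟨⟨hy.2, hy.1.1⟩, hy.1.2⟩
    have := card_le_card hsub
    rw [card_sdiff_of_subset (subset_inter hXL hXB), hX] at this
    have := hS.card_inter_le_four_s11 hLS hB hLB
    omega

theorem card_inter_eq_four_of_three_le (hS : IsSteinerSystem_5_8_24 S) (hK : K ∈ S)
    (hB : B ∈ S) (hKB : K ≠ B) (h : 3 ≤ #(K ∩ B)) : #(K ∩ B) = 4 := by
  have := hS.card_inter_le_four_s11 hK hB hKB
  have := hS.card_inter_ne_three hK hB hKB
  omega

theorem card_inter_eq_two_or_four_of_two_le (hS : IsSteinerSystem_5_8_24 S) (hK : K ∈ S)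
    (hB : B ∈ S) (hKB : K ≠ B) (h : 2 ≤ #(K ∩ B)) : #(K ∩ B) = 2 ∨ #(K ∩ B) = 4 := by
  have := hS.card_inter_le_four_s11 hK hB hKB
  have := hS.card_inter_ne_three hK hB hKB
  omega

/-- Each `k`-subset `T` of `K₀ \ R` lies, together with `E ∪ R`, in a unique octad, which meets
`K₀` in at least three and hence in four points; that octad contains exactly `C(4 - #R, k)` such
`T`. -/
theorem card_octadsMeetingInFour_mul_choose (hS : IsSteinerSystem_5_8_24 S) (hK₀ : K₀ ∈ S)
    {E R : Finset Ω} (hR : R ⊆ K₀) (hE : Disjoint E K₀) (hEne : E.Nonempty) {k : ℕ}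
    (hk5 : #E + #R + k = 5) (hk3 : 3 ≤ #R + k) :
    #(octadsMeetingInFour S K₀ (E ∪ R)) * (4 - #R).choose k = (8 - #R).choose k := by
  rw [← hS.2.1 K₀ hK₀, ← card_sdiff_of_subset hR, ← card_powersetCard, eq_comm, ← mul_one #_]
  refine card_mul_eq_card_mul (fun T K => T ⊆ K) (fun T hT => ?_) (fun K hK => ?_)
  · obtain ⟨hTK₀R, hTk⟩ := mem_powersetCard.1 hT
    obtain ⟨hTK₀, hTR⟩ := subset_sdiff.1 hTK₀R
    have hRT : Disjoint R T := hTR.symm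
    have hERT : Disjoint (E ∪ R) T := disjoint_union_left.2 ⟨hE.mono_right hTK₀, hRT⟩
    have hA5 : #(E ∪ R ∪ T) = 5 := by
      rw [card_union_of_disjoint hERT, card_union_of_disjoint (hE.mono_right hR), hTk, hk5]
    rw [← hS.card_filter_superset_of_card_eq_five hA5, bipartiteAbove]
    congr 1
    ext K
    simp only [octadsMeetingInFour, mem_filter, union_subset_iff]
    refine ⟨fun h => ⟨h.1.1, h.1.2.1, h.2⟩, fun h => ⟨⟨h.1, h.2.1, ?_⟩, h.2.2⟩⟩
    obtain ⟨hKS, ⟨hEK, hRK⟩, hTK⟩ := h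
    obtain ⟨e, he⟩ := hEne
    have hKK₀ : K ≠ K₀ := fun h => disjoint_left.1 hE he (h ▸ hEK he)
    refine hS.card_inter_eq_four_of_three_le hKS hK₀ hKK₀ (hk3.trans ?_)
    rw [← hTk, ← card_union_of_disjoint hRT]
    exact card_le_card (subset_inter (union_subset hRK hTK) (union_subset hR hTK₀))
  · obtain ⟨-, hERK, hK4⟩ := mem_filter.1 hK
    have hRKK₀ : R ⊆ K ∩ K₀ := subset_inter (union_subset_iff.1 hERK).2 hR
    rw [← hK4, ← card_sdiff_of_subset hRKK₀, ← card_powersetCard, bipartiteBelow]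
    congr 1
    ext T
    simp only [mem_filter, mem_powersetCard, subset_sdiff, subset_inter_iff]
    tauto

variable {e e' r r' : Ω}

theorem card_octadsMeetingInFour_pair (hS : IsSteinerSystem_5_8_24 S) (hK₀ : K₀ ∈ S)
    (he : e ∉ K₀) (hr : r ∈ K₀) : #(octadsMeetingInFour S K₀ {e, r}) = 35 := by
  have h := hS.card_octadsMeetingInFour_mul_choose hK₀ (singleton_subset_iff.2 hr)
    (disjoint_singleton_left.2 he) (singleton_nonempty e) (k := 3) (by simp) (by simp)
  rw [← insert_eq] at h
  simpa [Nat.choose] using h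

theorem card_octadsMeetingInFour_two_outside (hS : IsSteinerSystem_5_8_24 S) (hK₀ : K₀ ∈ S)
    (he : e ∉ K₀) (he' : e' ∉ K₀) (hee' : e' ≠ e) (hr : r ∈ K₀) :
    #(octadsMeetingInFour S K₀ {e', e, r}) = 7 := by
  have h := hS.card_octadsMeetingInFour_mul_choose hK₀ (E := {e', e})
    (singleton_subset_iff.2 hr) (by simp [he, he']) (insert_nonempty e' {e}) (k := 2)
    (by simp [card_pair hee']) (by simp)
  rw [insert_union, ← insert_eq] at h
  simp [Nat.choose] at h
  omega

theorem card_octadsMeetingInFour_two_inside (hS : IsSteinerSystem_5_8_24 S) (hK₀ : K₀ ∈ S)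
    (he : e ∉ K₀) (hr : r ∈ K₀) (hr' : r' ∈ K₀) (hr'r : r' ≠ r) :
    #(octadsMeetingInFour S K₀ {r', e, r}) = 15 := by
  have h := hS.card_octadsMeetingInFour_mul_choose hK₀ (E := {e}) (R := {r', r})
    (by simp [insert_subset_iff, hr, hr']) (disjoint_singleton_left.2 he) (singleton_nonempty e)
    (k := 2) (by simp [card_pair hr'r]) (by simp [card_pair hr'r])
  rw [← insert_eq, insert_comm] at h
  simpa [card_pair hr'r, Nat.choose] using h

theorem card_octadsMeetingInFour_two_outside_two_inside (hS : IsSteinerSystem_5_8_24 S)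
    (hK₀ : K₀ ∈ S) (he : e ∉ K₀) (he' : e' ∉ K₀) (hee' : e' ≠ e) (hr : r ∈ K₀) (hr' : r' ∈ K₀)
    (hr'r : r' ≠ r) : #(octadsMeetingInFour S K₀ {e', r', e, r}) = 3 := by
  have h := hS.card_octadsMeetingInFour_mul_choose hK₀ (E := {e', e}) (R := {r', r})
    (by simp [insert_subset_iff, hr, hr']) (by simp [he, he']) (insert_nonempty e' {e})
    (k := 1) (by simp [card_pair hee', card_pair hr'r]) (by simp [card_pair hr'r])
  rw [insert_union, ← insert_eq, insert_comm e] at h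
  simp [card_pair hr'r] at h
  omega

variable {u : Ω}

/-- The seven points of `K₀` other than `r` are covered by the five octads through
`{u, e', e, r}`, one octad for each point; an octad among them meeting `K₀` in at most two points
covers at most one. -/
theorem one_le_card_octadsMeetingInFour_three_outside (hS : IsSteinerSystem_5_8_24 S)
    (hK₀ : K₀ ∈ S) (hu : u ∉ K₀) (he : e ∉ K₀) (he' : e' ∉ K₀) (hue' : u ≠ e') (hue : u ≠ e)
    (hee' : e' ≠ e) (hr : r ∈ K₀) : 1 ≤ #(octadsMeetingInFour S K₀ {u, e', e, r}) := by
  set Q : Finset Ω := {u, e', e, r}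
  have hQ : #Q = 4 := by
    have hur : u ≠ r := fun h => hu (h ▸ hr)
    have he'r : e' ≠ r := fun h => he' (h ▸ hr)
    have her : e ≠ r := fun h => he (h ▸ hr)
    rw [card_insert_of_notMem (by simp [hue', hue, hur]),
      card_insert_of_notMem (by simp [hee', he'r]), card_pair her]
  by_contra! h0
  rw [Nat.lt_one_iff, card_eq_zero, eq_empty_iff_forall_notMem] at h0
  have h := card_mul_le_card_mul (s := K₀.erase r) (t := {K ∈ S | Q ⊆ K}) (m := 1) (n := 1)
    (fun c K => c ∈ K) (fun c hc => ?_) (fun K hK => ?_)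
  · rw [card_erase_of_mem hr, hS.2.1 K₀ hK₀, hS.card_filter_superset_of_card_eq_four hQ] at h
    omega
  · obtain ⟨hcr, hcK₀⟩ := mem_erase.1 hc
    have hcQ : c ∉ Q := by
      simp only [Q, mem_insert, mem_singleton, not_or]
      exact ⟨fun h => hu (h ▸ hcK₀), fun h => he' (h ▸ hcK₀), fun h => he (h ▸ hcK₀), hcr⟩
    rw [← hS.card_filter_superset_of_card_eq_five (A := insert c Q)
      (by rw [card_insert_of_notMem hcQ, hQ]), bipartiteAbove, filter_filter]
    simp only [insert_subset_iff, and_comm, le_refl]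
  · obtain ⟨hKS, hQK⟩ := mem_filter.1 hK
    have hKK₀ : K ≠ K₀ := fun h => he (h ▸ hQK (by simp [Q]))
    have hK4 : #(K ∩ K₀) ≠ 4 := fun h4 => h0 K (mem_filter.2 ⟨hKS, hQK, h4⟩)
    have := hS.card_inter_le_four_s11 hKS hK₀ hKK₀
    have := hS.card_inter_ne_three hKS hK₀ hKK₀
    have hbelow : (K₀.erase r).bipartiteBelow (fun c K => c ∈ K) K = (K ∩ K₀).erase r := by
      ext c
      simp only [bipartiteBelow, mem_filter, mem_erase, mem_inter]
      tauto
    rw [hbelow, card_erase_of_mem (mem_inter.2 ⟨hQK (by simp [Q]), hr⟩)]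
    omega

/-- Summed over the fourteen points `u` outside `K₀ ∪ {e', e}`, the counts add up to
`7 * 2 = 14`, each of the seven octads through `{e', e, r}` meeting `K₀` in four points having two
such points; so each count, being positive, is one. -/
theorem card_octadsMeetingInFour_three_outside (hS : IsSteinerSystem_5_8_24 S) (hK₀ : K₀ ∈ S)
    (hu : u ∉ K₀) (he : e ∉ K₀) (he' : e' ∉ K₀) (hue' : u ≠ e') (hue : u ≠ e) (hee' : e' ≠ e)
    (hr : r ∈ K₀) : #(octadsMeetingInFour S K₀ {u, e', e, r}) = 1 := by
  set U := K₀ᶜ \ {e', e}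
  have hU : #U = 14 := by
    rw [card_sdiff_of_subset (by simp [insert_subset_iff, he, he']), card_compl, hS.1,
      hS.2.1 K₀ hK₀, card_pair hee']
  have hsum : ∑ v ∈ U, #(octadsMeetingInFour S K₀ {v, e', e, r}) = 14 := by
    calc ∑ v ∈ U, #(octadsMeetingInFour S K₀ {v, e', e, r})
        = ∑ K ∈ octadsMeetingInFour S K₀ {e', e, r}, #{v ∈ U | v ∈ K} := by
          simp_rw [← filter_mem_octadsMeetingInFour]
          exact sum_card_bipartiteAbove_eq_sum_card_bipartiteBelow _
      _ = #(octadsMeetingInFour S K₀ {e', e, r}) * 2 := sum_const_nat fun K hK => ?_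
      _ = 14 := by rw [hS.card_octadsMeetingInFour_two_outside hK₀ he he' hee' hr]
    obtain ⟨hKS, hK, hK4⟩ := mem_filter.1 hK
    simp only [insert_subset_iff, singleton_subset_iff] at hK
    have hsd : {v ∈ U | v ∈ K} = (K \ K₀) \ {e', e} := by
      ext v
      simp only [U, mem_filter, mem_sdiff, mem_compl]
      tauto
    have h8 := card_sdiff_add_card_inter K K₀
    rw [hK4, hS.2.1 K hKS] at h8
    rw [hsd, card_sdiff_of_subset (by simp [insert_subset_iff, he, he', hK.1, hK.2.1]),
      card_pair hee']
    omega
  have hle : ∀ v ∈ U, 1 ≤ #(octadsMeetingInFour S K₀ {v, e', e, r}) := fun v hv => by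
    simp only [U, mem_sdiff, mem_compl, mem_insert, mem_singleton, not_or] at hv
    exact hS.one_le_card_octadsMeetingInFour_three_outside hK₀ hv.1 he he' hv.2.1 hv.2.2 hee' hr
  refine ((sum_eq_sum_iff_of_le hle).1 ?_ u (by simp [U, hu, hue, hue'])).symm
  rw [hsum, sum_const, smul_eq_mul, mul_one, hU]

theorem card_filter_notMem_octadsMeetingInFour_pair (hS : IsSteinerSystem_5_8_24 S)
    (hK₀ : K₀ ∈ S) (he : e ∉ K₀) (he' : e' ∉ K₀) (hee' : e' ≠ e) (hr : r ∈ K₀) :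
    #{K ∈ octadsMeetingInFour S K₀ {e, r} | e' ∉ K} = 28 := by
  rw [card_filter_notMem_octadsMeetingInFour, hS.card_octadsMeetingInFour_pair hK₀ he hr,
    hS.card_octadsMeetingInFour_two_outside hK₀ he he' hee' hr]

theorem card_filter_mem_filter_notMem_octadsMeetingInFour_pair (hS : IsSteinerSystem_5_8_24 S)
    (hK₀ : K₀ ∈ S) (he : e ∉ K₀) (he' : e' ∉ K₀) (hee' : e' ≠ e) (hr : r ∈ K₀) {p : Ω}
    (hpe : p ≠ e) (hpe' : p ≠ e') (hpr : p ≠ r) :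
    #{K ∈ {K ∈ octadsMeetingInFour S K₀ {e, r} | e' ∉ K} | p ∈ K} =
      if p ∈ K₀ then 12 else 6 := by
  rw [filter_comm, filter_mem_octadsMeetingInFour, card_filter_notMem_octadsMeetingInFour]
  split_ifs with hp
  · rw [hS.card_octadsMeetingInFour_two_inside hK₀ he hr hp hpr,
      hS.card_octadsMeetingInFour_two_outside_two_inside hK₀ he he' hee' hr hp hpr]
  · rw [hS.card_octadsMeetingInFour_two_outside hK₀ he hp hpe hr, insert_comm,
      hS.card_octadsMeetingInFour_three_outside hK₀ hp he he' hpe' hpe hee' hr]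

theorem sum_card_filter_mem_filter_notMem_octadsMeetingInFour_pair
    (hS : IsSteinerSystem_5_8_24 S) (hK₀ : K₀ ∈ S) (he : e ∉ K₀) (he' : e' ∉ K₀) (hee' : e' ≠ e)
    (hr : r ∈ K₀) (hK : K ∈ {K ∈ octadsMeetingInFour S K₀ {e, r} | e' ∉ K}) :
    ∑ p ∈ K \ {e, r}, #{K' ∈ {K ∈ octadsMeetingInFour S K₀ {e, r} | e' ∉ K} | p ∈ K'} = 54 := by
  obtain ⟨⟨hKS, herK, hK4⟩, he'K⟩ := mem_filter.1 hK |>.imp_left mem_filter.1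
  have her : e ≠ r := fun h => he (h ▸ hr)
  have hsix : #(K \ {e, r}) = 6 := by
    rw [card_sdiff_of_subset herK, hS.2.1 K hKS, card_pair her]
  have hin : #{p ∈ K \ {e, r} | p ∈ K₀} = 3 := by
    rw [show {p ∈ K \ {e, r} | p ∈ K₀} = (K ∩ K₀).erase r by
        ext p
        simp only [mem_filter, mem_sdiff, mem_insert, mem_singleton, mem_erase, mem_inter]
        grind,
      card_erase_of_mem (mem_inter.2 ⟨herK (by simp), hr⟩), hK4]
  have hcount : ∀ p ∈ K \ {e, r},
      #{K' ∈ {K ∈ octadsMeetingInFour S K₀ {e, r} | e' ∉ K} | p ∈ K'} =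
        if p ∈ K₀ then 12 else 6 := by
    intro p hp
    simp only [mem_sdiff, mem_insert, mem_singleton, not_or] at hp
    exact hS.card_filter_mem_filter_notMem_octadsMeetingInFour_pair hK₀ he he' hee' hr hp.2.1
      (fun h => he'K (h ▸ hp.1)) hp.2.2
  have hsplit := card_filter_add_card_filter_not (s := K \ {e, r}) (· ∈ K₀)
  rw [sum_congr rfl hcount, sum_ite, sum_const, sum_const, smul_eq_mul, smul_eq_mul]
  omega

variable {F : Finset (Finset Ω)} {a b : Ω}

theorem card_inter_eq_two_or_four_of_forall_mem (hS : IsSteinerSystem_5_8_24 S) (hFS : F ⊆ S)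
    (hab : a ≠ b) (hF : ∀ K ∈ F, a ∈ K ∧ b ∈ K) (hK : K ∈ F) {K' : Finset Ω} (hK' : K' ∈ F)
    (hK'K : K' ≠ K) : #(K ∩ K') = 2 ∨ #(K ∩ K') = 4 := by
  refine hS.card_inter_eq_two_or_four_of_two_le (hFS hK) (hFS hK') hK'K.symm ?_
  rw [← card_pair hab]
  exact card_le_card (by simp [insert_subset_iff, hF K hK, hF K' hK'])

/-- Double counting incidences between the six points of `K` other than `a, b` and the members
of `F`: `K` contains all six, and any other member contains two of them or none. -/
theorem sum_card_filter_mem_eq (hS : IsSteinerSystem_5_8_24 S) (hFS : F ⊆ S) (hab : a ≠ b)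
    (hF : ∀ K ∈ F, a ∈ K ∧ b ∈ K) (hK : K ∈ F) :
    ∑ p ∈ K \ {a, b}, #{K' ∈ F | p ∈ K'} = 6 + 2 * #{K' ∈ F | K' ≠ K ∧ #(K ∩ K') = 4} := by
  have habK : {a, b} ⊆ K := by simp [insert_subset_iff, hF K hK]
  have hterm : ∀ K' ∈ F, #{p ∈ K \ {a, b} | p ∈ K'} =
      6 * (if K' = K then 1 else 0) + 2 * (if K' ≠ K ∧ #(K ∩ K') = 4 then 1 else 0) := by
    intro K' hK'
    by_cases hK'K : K' = K
    · subst hK'K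
      rw [filter_true_of_mem fun p hp => (mem_sdiff.1 hp).1, card_sdiff_of_subset habK,
        hS.2.1 K' (hFS hK), card_pair hab]
      simp
    · have habKK' : {a, b} ⊆ K ∩ K' := by simp [insert_subset_iff, hF K hK, hF K' hK']
      have h2 : #{p ∈ K \ {a, b} | p ∈ K'} + 2 = #(K ∩ K') := by
        rw [← card_pair hab, ← card_sdiff_add_card_inter (K ∩ K') {a, b},
          inter_eq_right.2 habKK', filter_mem_eq_inter, sdiff_inter_right_comm]
      rw [if_neg hK'K]
      rcases hS.card_inter_eq_two_or_four_of_forall_mem hFS hab hF hK hK' hK'K with h | h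
      · rw [if_neg fun h' => by omega]
        omega
      · rw [if_pos ⟨hK'K, h⟩]
        omega
  have hdc := sum_card_bipartiteAbove_eq_sum_card_bipartiteBelow (s := K \ {a, b}) (t := F)
    (fun p K' => p ∈ K')
  simp only [bipartiteAbove, bipartiteBelow] at hdc
  rw [hdc, sum_congr rfl hterm, sum_add_distrib, ← mul_sum, ← mul_sum, ← card_filter, ← card_filter,
    filter_eq' F K, if_pos hK, card_singleton, mul_one]

theorem card_filter_inter_eq_two_add_card_filter_inter_eq_four (hS : IsSteinerSystem_5_8_24 S)
    (hFS : F ⊆ S) (hab : a ≠ b) (hF : ∀ K ∈ F, a ∈ K ∧ b ∈ K) (hK : K ∈ F) :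
    #{K' ∈ F | K' ≠ K ∧ #(K ∩ K') = 2} + #{K' ∈ F | K' ≠ K ∧ #(K ∩ K') = 4} = #F - 1 := by
  rw [← card_erase_of_mem hK,
    ← card_filter_add_card_filter_not (s := F.erase K) (fun K' => #(K ∩ K') = 4), add_comm]
  congr 2 <;> ext K' <;> simp only [mem_filter, mem_erase]
  · tauto
  · constructor
    · rintro ⟨hK', hK'K, h2⟩
      exact ⟨⟨hK'K, hK'⟩, by omega⟩
    · rintro ⟨⟨hK'K, hK'⟩, h4⟩
      have := hS.card_inter_eq_two_or_four_of_forall_mem hFS hab hF hK hK' hK'K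
      exact ⟨hK', hK'K, by omega⟩

end IsSteinerSystem_5_8_24

end

theorem coxeter_graph_cubic_general {Ω : Type*} [Fintype Ω] [DecidableEq Ω]
    (S : Finset (Finset Ω)) (hS : IsSteinerSystem_5_8_24 S)
    (pinf p0 p1 : Ω) (hinf0 : pinf ≠ p0) (hinf1 : pinf ≠ p1)
    (K₀ : Finset Ω) (hK₀S : K₀ ∈ S)
    (h0K : p0 ∈ K₀) (hinfK : pinf ∉ K₀) (h1K : p1 ∉ K₀)
    (F : Finset (Finset Ω))
    (hF : F = S.filter fun K => pinf ∈ K ∧ p0 ∈ K ∧ p1 ∉ K ∧ (K ∩ K₀).card = 4) :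
    ∀ K ∈ F,
      (F.filter fun K' => K' ≠ K ∧ (K ∩ K').card = 2).card = 3 ∧
      (F.filter fun K' => K' ≠ K ∧ (K ∩ K').card = 4).card = 24 := by
  have hF' : F = {K ∈ octadsMeetingInFour S K₀ {pinf, p0} | p1 ∉ K} := by
    rw [hF]
    ext K
    simp only [octadsMeetingInFour, mem_filter, insert_subset_iff, singleton_subset_iff]
    tauto
  have hFS : F ⊆ S := hF ▸ filter_subset _ S
  have hpair : ∀ K ∈ F, pinf ∈ K ∧ p0 ∈ K := fun K hK => by
    rw [hF, mem_filter] at hK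
    exact ⟨hK.2.1, hK.2.2.1⟩
  intro K hK
  have hsum : ∑ p ∈ K \ {pinf, p0}, #{K' ∈ F | p ∈ K'} = 54 := by
    rw [hF'] at hK ⊢
    exact hS.sum_card_filter_mem_filter_notMem_octadsMeetingInFour_pair hK₀S hinfK h1K
      hinf1.symm h0K hK
  have hcard : #F = 28 := hF' ▸ hS.card_filter_notMem_octadsMeetingInFour_pair hK₀S hinfK h1K
    hinf1.symm h0K
  have h4 := hS.sum_card_filter_mem_eq hFS hinf0 hpair hK
  have h24 := hS.card_filter_inter_eq_two_add_card_filter_inter_eq_four hFS hinf0 hpair hK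
  omega

theorem coxeter_graph_cubic {Ω : Type*} [Fintype Ω] [DecidableEq Ω]
    (S : Finset (Finset Ω)) (hS : IsSteinerSystem_5_8_24 S)
    (pinf p0 p1 : Ω) (h01 : p0 ≠ p1) (hinf0 : pinf ≠ p0) (hinf1 : pinf ≠ p1)
    (K₀ : Finset Ω) (hK₀S : K₀ ∈ S)
    (h0K : p0 ∈ K₀) (hinfK : pinf ∉ K₀) (h1K : p1 ∉ K₀)
    (F : Finset (Finset Ω))
    (hF : F = S.filter fun K => pinf ∈ K ∧ p0 ∈ K ∧ p1 ∉ K ∧ (K ∩ K₀).card = 4) :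
    ∀ K ∈ F,
      (F.filter fun K' => K' ≠ K ∧ (K ∩ K').card = 2).card = 3 ∧
      (F.filter fun K' => K' ≠ K ∧ (K ∩ K').card = 4).card = 24 :=
  coxeter_graph_cubic_general S hS pinf p0 p1 hinf0 hinf1 K₀ hK₀S h0K hinfK h1K F hF
end

section
/- Let Ω be a 24-element set, let ∞, 0, 1 ∈ Ω be distinct points, and let K₀ ⊆ Ω be an 8-element subset with 0 ∈ K₀ and ∞ ∉ K₀, 1 ∉ K₀. In the rational quadratic space V = ℚ × ℚ × ℚ^Ω with bilinear form ⟨(m,n,λ),(m',n',λ')⟩ = mn' + m'n − (1/8)·Σ_{i∈Ω} λᵢλ'ᵢ, define Y = 4ν₀ + ν_Ω, Z = 0, X = 4ν_∞ + ν_Ω, P = 2ν_{K₀}, Q = 4ν_∞ + 4ν₀, T = ν_Ω − 4ν₁, and the vectors y = (2,1,Y), z = (−1,1,Z), x = (2,1,X), p = (1,1,P), q = (1,1,Q), t = (1,1,T). Then the Gram matrix of (y, z, x, p, q, t) is the negative of the Cartan matrix of type A₆: each of the six vectors has norm −2, the consecutive pairs (y,z), (z,x), (x,p), (p,q), (q,t)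 have inner product 1, and all other pairs are orthogonal. In particular these six vectors span a root lattice of type A₆. -/
/-- The bilinear form on `ℚ × ℚ × ℚ^Ω` underlying `II₁,₂₅ = U ⊕ Λ`:
`⟨(m,n,λ),(m',n',λ')⟩ = mn' + m'n − (1/8)·Σᵢ λᵢλ'ᵢ`. -/
def bform {Ω : Type*} [Fintype Ω] (v w : ℚ × ℚ × (Ω → ℚ)) : ℚ :=
  v.1 * w.2.1 + w.1 * v.2.1 - (∑ i, v.2.2 i * w.2.2 i) / 8

/-- Indicator vector `ν_α` of a subset `α ⊆ Ω`. -/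
def ind {Ω : Type*} [DecidableEq Ω] (α : Finset Ω) : Ω → ℚ :=
  fun i => if i ∈ α then 1 else 0


lemma sum_ind {Ω : Type*} [Fintype Ω] [DecidableEq Ω] (A : Finset Ω) :
    ∑ i, ind A i = (A.card : ℚ) := by
  simp [ind, Finset.sum_boole, Finset.filter_mem_eq_inter]

lemma sum_ind_mul {Ω : Type*} [Fintype Ω] [DecidableEq Ω] (A B : Finset Ω) :
    ∑ i, ind A i * ind B i = ((A ∩ B).card : ℚ) := by
  have : ∀ i, ind A i * ind B i = ind (A ∩ B) i := by
    intro i; simp only [ind, Finset.mem_inter, ite_and, ite_zero_mul, mul_ite, mul_one, mul_zero]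
    split_ifs <;> simp_all
  rw [Finset.sum_congr rfl fun i _ => this i, sum_ind]

lemma sum_expand {Ω : Type*} [Fintype Ω] [DecidableEq Ω]
    (a b c a' b' c' : ℚ) (A B A' B' : Finset Ω) :
    ∑ i, (a * ind A i + b * ind B i + c) * (a' * ind A' i + b' * ind B' i + c') =
      a*a'*((A ∩ A').card) + a*b'*((A ∩ B').card) + a*c'*(A.card)
      + b*a'*((B ∩ A').card) + b*b'*((B ∩ B').card) + b*c'*(B.card)
      + c*a'*(A'.card) + c*b'*(B'.card) + c*c'*(Fintype.card Ω) := by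
  have h : ∀ i : Ω, (a * ind A i + b * ind B i + c) * (a' * ind A' i + b' * ind B' i + c') =
      a*a'*(ind A i * ind A' i) + a*b'*(ind A i * ind B' i) + a*c'*(ind A i)
      + b*a'*(ind B i * ind A' i) + b*b'*(ind B i * ind B' i) + b*c'*(ind B i)
      + c*a'*(ind A' i) + c*b'*(ind B' i) + c*c' := fun i => by ring
  rw [Finset.sum_congr rfl fun i _ => h i]
  simp only [Finset.sum_add_distrib, ← Finset.mul_sum, sum_ind, sum_ind_mul,
    Finset.sum_const, Finset.card_univ, nsmul_eq_mul]
  ring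

lemma vec6_five {α : Type*} (x0 x1 x2 x3 x4 x5 : α) :
    ![x0, x1, x2, x3, x4, x5] 5 = x5 := rfl

/-- The six vectors `y, z, x, p, q, t` of the paper, i.e. the Leech roots of
`Y = 4ν₀ + ν_Ω`, `Z = 0`, `X = 4ν_∞ + ν_Ω`, `P = 2ν_{K₀}`, `Q = 4ν_∞ + 4ν₀`,
`T = ν_Ω − 4ν₁`. -/
def a6Roots {Ω : Type*} [Fintype Ω] [DecidableEq Ω]
    (pinf p0 p1 : Ω) (K₀ : Finset Ω) : Fin 6 → ℚ × ℚ × (Ω → ℚ) :=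
  ![ (2, 1, fun i => 4 * ind {p0} i + 1),
     (-1, 1, fun _ => 0),
     (2, 1, fun i => 4 * ind {pinf} i + 1),
     (1, 1, fun i => 2 * ind K₀ i),
     (1, 1, fun i => 4 * ind {pinf} i + 4 * ind {p0} i),
     (1, 1, fun i => 1 - 4 * ind {p1} i) ]

/-- The Gram matrix of `(y, z, x, p, q, t)` is the negative of the Cartan matrix of
type `A₆`: every vector has norm `−2`, consecutive vectors pair to `1`, and all
other pairs are orthogonal. -/
theorem gram_matrix_A6 {Ω : Type*} [Fintype Ω] [DecidableEq Ω]
    (hΩ : Fintype.card Ω = 24)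
    (pinf p0 p1 : Ω) (h01 : p0 ≠ p1) (hinf0 : pinf ≠ p0) (hinf1 : pinf ≠ p1)
    (K₀ : Finset Ω) (hK₀card : K₀.card = 8)
    (h0K : p0 ∈ K₀) (hinfK : pinf ∉ K₀) (h1K : p1 ∉ K₀) :
    ∀ i j : Fin 6,
      bform (a6Roots pinf p0 p1 K₀ i) (a6Roots pinf p0 p1 K₀ j) =
        if i = j then -2
        else if i.val + 1 = j.val ∨ j.val + 1 = i.val then 1 else 0 := by
  set m : Fin 6 → ℚ := ![2, -1, 2, 1, 1, 1] with hm
  set a : Fin 6 → ℚ := ![4, 0, 4, 2, 4, -4] with ha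
  set b : Fin 6 → ℚ := ![0, 0, 0, 0, 4, 0] with hb
  set c : Fin 6 → ℚ := ![1, 0, 1, 0, 0, 1] with hc
  set A : Fin 6 → Finset Ω := ![{p0}, ∅, {pinf}, K₀, {pinf}, {p1}] with hA
  set B : Fin 6 → Finset Ω := ![∅, ∅, ∅, ∅, {p0}, ∅] with hB
  have hR : ∀ k : Fin 6, a6Roots pinf p0 p1 K₀ k =
      (m k, 1, fun i => a k * ind (A k) i + b k * ind (B k) i + c k) := by
    intro k
    fin_cases k <;>
      refine Prod.ext rfl (Prod.ext rfl (funext fun i => ?_)) <;>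
      simp only [a6Roots, hm, ha, hb, hc, hA, hB, ind, Matrix.cons_val_zero,
        Matrix.cons_val_one, Matrix.head_cons, Matrix.cons_val_two, Matrix.tail_cons,
        Matrix.cons_val_three, Matrix.cons_val_four, Matrix.cons_val_succ,
        Matrix.cons_val_zero', Matrix.cons_val_succ',
        Finset.mem_singleton, Finset.notMem_empty, if_false, mul_ite, mul_one, mul_zero] <;>
      first | ring1 | (split_ifs <;> ring1)
  intro i j
  rw [hR i, hR j]
  show m i * 1 + m j * 1 - (∑ k, _ * _) / 8 = _
  rw [sum_expand]
  have hi0 : {p0} ∩ {pinf} = (∅ : Finset Ω) :=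
    Finset.singleton_inter_of_notMem (by simp [hinf0.symm])
  have hi1 : {pinf} ∩ {p0} = (∅ : Finset Ω) :=
    Finset.singleton_inter_of_notMem (by simp [hinf0])
  have hi2 : {p0} ∩ {p1} = (∅ : Finset Ω) :=
    Finset.singleton_inter_of_notMem (by simp [h01])
  have hi3 : {p1} ∩ {p0} = (∅ : Finset Ω) :=
    Finset.singleton_inter_of_notMem (by simp [h01.symm])
  have hi4 : {pinf} ∩ {p1} = (∅ : Finset Ω) :=
    Finset.singleton_inter_of_notMem (by simp [hinf1])
  have hi5 : {p1} ∩ {pinf} = (∅ : Finset Ω) :=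
    Finset.singleton_inter_of_notMem (by simp [hinf1.symm])
  have hk0 : {p0} ∩ K₀ = ({p0} : Finset Ω) := Finset.singleton_inter_of_mem h0K
  have hk0' : K₀ ∩ {p0} = ({p0} : Finset Ω) := by rw [Finset.inter_comm]; exact hk0
  have hkinf : {pinf} ∩ K₀ = (∅ : Finset Ω) := Finset.singleton_inter_of_notMem hinfK
  have hkinf' : K₀ ∩ {pinf} = (∅ : Finset Ω) := by rw [Finset.inter_comm]; exact hkinf
  have hk1 : {p1} ∩ K₀ = (∅ : Finset Ω) := Finset.singleton_inter_of_notMem h1K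
  have hk1' : K₀ ∩ {p1} = (∅ : Finset Ω) := by rw [Finset.inter_comm]; exact hk1
  fin_cases i <;> fin_cases j <;>
    simp [hm, ha, hb, hc, hA, hB, hΩ, hK₀card, hi0, hi1, hi2, hi3, hi4, hi5,
      hk0, hk0', hkinf, hkinf', hk1, hk1', Finset.inter_self, vec6_five] <;> norm_num
end

section
/- Let S be a Steiner system S(5,8,24) on a 24-element set Ω, let ∞, 0, 1 ∈ Ω be distinct points, and let K₀ ∈ S be an octad with 0 ∈ K₀ and ∞ ∉ K₀, 1 ∉ K₀. In the rational quadratic space V = ℚ × ℚ × ℚ^Ω with bilinear form ⟨(m,n,λ),(m',n',λ')⟩ = mn' + m'n − (1/8)·Σ_{i∈Ω} λᵢλ'ᵢ, let y, z, x, p, q, t be the Leech roots of Y = 4ν₀ + ν_Ω, Z = 0, X = 4ν_∞ + ν_Ω, P = 2ν_{K₀}, Q = 4ν_∞ + 4ν₀, T = ν_Ω − 4ν₁, let w = (1,0,0), w'' = −3y − 5z − 6x − 6p − 5q − 3t and w' = w − w''. Let F = {K ∈ S : ∞ ∈ K, 0 ∈ K, 1 ∉ K, |K ∩ K₀| = 4}.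 Then w' = Σ_{K ∈ F} (1, 1, 2ν_K), i.e. the projection of the Weyl vector is the sum of the 28 Leech roots corresponding to the octads in F. -/
open Finset

section AuxCounting
set_option linter.unusedSectionVars false
set_option maxHeartbeats 1000000

variable {Ω : Type*} [Fintype Ω] [DecidableEq Ω]

lemma card_between_s14 (A U : Finset Ω) (hAU : A ⊆ U) (k : ℕ) (hk : A.card ≤ k) :
    ((U.powersetCard k).filter (fun B => A ⊆ B)).card
      = (U.card - A.card).choose (k - A.card) := by
  rw [← card_sdiff_of_subset hAU, ← card_powersetCard]
  apply Finset.card_bij' (fun B _ => B \ A) (fun C _ => C ∪ A)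
  · intro B hB
    simp only [mem_filter, mem_powersetCard] at hB ⊢
    obtain ⟨⟨hBU, hB5⟩, hAB⟩ := hB
    exact ⟨sdiff_subset_sdiff hBU le_rfl, by rw [card_sdiff_of_subset hAB, hB5]⟩
  · intro C hC
    simp only [mem_filter, mem_powersetCard] at hC ⊢
    obtain ⟨hCU, hCc⟩ := hC
    have hdis : Disjoint C A := disjoint_of_subset_left hCU sdiff_disjoint
    refine ⟨⟨union_subset (hCU.trans (sdiff_subset)) hAU, ?_⟩, subset_union_right⟩
    rw [card_union_of_disjoint hdis, hCc]
    omega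
  · intro B hB
    simp only [mem_filter, mem_powersetCard] at hB
    exact sdiff_union_of_subset hB.2
  · intro C hC
    simp only [mem_filter, mem_powersetCard] at hC
    exact union_sdiff_cancel_right (disjoint_of_subset_left hC.1 sdiff_disjoint)

lemma double_count (S : Finset (Finset Ω)) (hS : IsSteinerSystem_5_8_24 S)
    (A : Finset Ω) (hA : A.card ≤ 5) :
    (S.filter (fun K => A ⊆ K)).card * (8 - A.card).choose (5 - A.card)
      = (24 - A.card).choose (5 - A.card) := by
  obtain ⟨hcard, hoct, hst⟩ := hS
  have key : (Finset.univ.powersetCard 5).filter (fun B => A ⊆ B)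
      = S.biUnion (fun K => (K.powersetCard 5).filter (fun B => A ⊆ B)) := by
    ext B
    simp only [mem_biUnion, mem_filter, mem_powersetCard]
    constructor
    · rintro ⟨⟨-, h5⟩, hAB⟩
      obtain ⟨K, ⟨hKS, hBK⟩, -⟩ := hst B h5
      exact ⟨K, hKS, ⟨hBK, h5⟩, hAB⟩
    · rintro ⟨K, hK, ⟨hBK, h5⟩, hAB⟩
      exact ⟨⟨subset_univ _, h5⟩, hAB⟩
  have hdisj : ∀ x ∈ S, ∀ y ∈ S, x ≠ y →
      Disjoint ((x.powersetCard 5).filter (fun B => A ⊆ B))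
        ((y.powersetCard 5).filter (fun B => A ⊆ B)) := by
    intro x hx y hy hxy
    rw [disjoint_left]
    intro B hBx hBy
    simp only [mem_filter, mem_powersetCard] at hBx hBy
    obtain ⟨K, -, hU⟩ := hst B hBx.1.2
    exact hxy ((hU x ⟨hx, hBx.1.1⟩).trans (hU y ⟨hy, hBy.1.1⟩).symm)
  have h1 : ((Finset.univ.powersetCard 5).filter (fun B => A ⊆ B)).card
      = (24 - A.card).choose (5 - A.card) := by
    rw [card_between_s14 A Finset.univ (subset_univ A) 5 hA, card_univ, hcard]
  rw [← h1, key, card_biUnion hdisj]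
  rw [← Finset.sum_filter_add_sum_filter_not S (fun K => A ⊆ K)]
  have h2 : ∀ K ∈ S.filter (fun K => ¬ A ⊆ K),
      ((K.powersetCard 5).filter (fun B => A ⊆ B)).card = 0 := by
    intro K hK
    rw [mem_filter] at hK
    rw [card_eq_zero, filter_eq_empty_iff]
    intro B hB
    rw [mem_powersetCard] at hB
    exact fun hAB => hK.2 (hAB.trans hB.1)
  rw [Finset.sum_congr rfl h2, Finset.sum_const, smul_zero, add_zero]
  have h3 : ∀ K ∈ S.filter (fun K => A ⊆ K),
      ((K.powersetCard 5).filter (fun B => A ⊆ B)).card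
        = (8 - A.card).choose (5 - A.card) := by
    intro K hK
    rw [mem_filter] at hK
    rw [card_between_s14 A K hK.2 5 hA, hoct K hK.1]
  rw [Finset.sum_congr rfl h3, Finset.sum_const, smul_eq_mul]

lemma blocks_card (S : Finset (Finset Ω)) (hS : IsSteinerSystem_5_8_24 S)
    (A : Finset Ω) (a n : ℕ) (hA : A.card = a) (ha : a ≤ 5)
    (hn : n * (8 - a).choose (5 - a) = (24 - a).choose (5 - a)) :
    (S.filter (fun K => A ⊆ K)).card = n := by
  have h := double_count S hS A (by omega)
  rw [hA] at h
  have hpos : 0 < (8 - a).choose (5 - a) := Nat.choose_pos (by omega)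
  exact Nat.eq_of_mul_eq_mul_right hpos (h.trans hn.symm)

lemma moment_s14 (S : Finset (Finset Ω)) (hS : IsSteinerSystem_5_8_24 S)
    (K₀ G : Finset Ω) (s n : ℕ) (hs : s + G.card ≤ 5)
    (hn : n * (8 - (s + G.card)).choose (5 - (s + G.card))
        = (24 - (s + G.card)).choose (5 - (s + G.card))) :
    ∑ K ∈ S.filter (fun K => G ⊆ K), (((K ∩ K₀) \ G).card).choose s
      = ((K₀ \ G).card).choose s * n := by
  have step1 : ∀ K ∈ S.filter (fun K => G ⊆ K),
      (((K ∩ K₀) \ G).card).choose s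
        = ∑ A ∈ (K₀ \ G).powersetCard s, (if A ⊆ K then 1 else 0) := by
    intro K hK
    rw [← card_filter, ← card_powersetCard]
    congr 1
    ext A
    simp only [mem_powersetCard, mem_filter, subset_sdiff, subset_inter_iff]
    tauto
  rw [Finset.sum_congr rfl step1, Finset.sum_comm]
  have step2 : ∀ A ∈ (K₀ \ G).powersetCard s,
      ∑ K ∈ S.filter (fun K => G ⊆ K), (if A ⊆ K then 1 else 0) = n := by
    intro A hA
    rw [mem_powersetCard] at hA
    rw [← card_filter, filter_filter]
    have heq : S.filter (fun K => G ⊆ K ∧ A ⊆ K) = S.filter (fun K => G ∪ A ⊆ K) := by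
      apply filter_congr
      intro K _
      simp [union_subset_iff]
    rw [heq]
    apply blocks_card S hS (G ∪ A) (s + G.card) n _ hs hn
    rw [card_union_of_disjoint (disjoint_of_subset_right hA.1 disjoint_sdiff)]
    rw [hA.2]; omega
  rw [Finset.sum_congr rfl step2, Finset.sum_const, card_powersetCard, smul_eq_mul]

lemma inter_card_le (S : Finset (Finset Ω)) (hS : IsSteinerSystem_5_8_24 S)
    (K₀ : Finset Ω) (hK₀ : K₀ ∈ S) {K : Finset Ω} (hK : K ∈ S) (hne : K ≠ K₀) :
    (K ∩ K₀).card ≤ 4 := by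
  by_contra h
  push_neg at h
  obtain ⟨A, hA, hA5⟩ := Finset.exists_subset_card_eq (by omega : 5 ≤ (K ∩ K₀).card)
  obtain ⟨W, -, hU⟩ := hS.2.2 A hA5
  exact hne ((hU K ⟨hK, hA.trans inter_subset_left⟩).trans
    (hU K₀ ⟨hK₀, hA.trans inter_subset_right⟩).symm)

lemma fiber_eq {β : Type*} [DecidableEq β] (T : Finset β) (g : β → ℕ)
    (hb : ∀ K ∈ T, g K ≤ 4) (F : ℕ → ℕ) :
    ∑ K ∈ T, F (g K) = ∑ j ∈ range 5, (T.filter (fun K => g K = j)).card * F j := by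
  rw [← Finset.sum_fiberwise_of_maps_to (g := g) (t := range 5)
    (fun K hK => mem_range.mpr (by have := hb K hK; omega)) (fun K => F (g K))]
  apply Finset.sum_congr rfl
  intro j _
  rw [← smul_eq_mul, ← Finset.sum_const]
  apply Finset.sum_congr rfl
  intro K hK
  rw [(mem_filter.mp hK).2]

lemma master (S : Finset (Finset Ω)) (hS : IsSteinerSystem_5_8_24 S)
    (K₀ : Finset Ω) (hK₀S : K₀ ∈ S) (pinf : Ω) (hinfK : pinf ∉ K₀)
    (G : Finset Ω) (hG : pinf ∈ G) (s n d gc : ℕ)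
    (hd : (K₀ ∩ G).card = d) (hgc : G.card = gc)
    (hs : s + gc ≤ 5)
    (hn : n * (8 - (s + gc)).choose (5 - (s + gc))
        = (24 - (s + gc)).choose (5 - (s + gc))) :
    ∑ j ∈ Finset.range 5,
      (S.filter (fun K => G ⊆ K ∧ (K ∩ K₀).card = j)).card * ((j - d).choose s)
      = (8 - d).choose s * n := by
  have h8 : K₀.card = 8 := hS.2.1 K₀ hK₀S
  have hKG : (K₀ \ G).card = 8 - d := by
    have := card_sdiff_add_card_inter K₀ G
    omega
  have hbound : ∀ K ∈ S.filter (fun K => G ⊆ K), (K ∩ K₀).card ≤ 4 := by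
    intro K hK
    rw [mem_filter] at hK
    refine inter_card_le S hS K₀ hK₀S hK.1 ?_
    rintro rfl
    exact hinfK (hK.2 hG)
  have key : ∀ K ∈ S.filter (fun K => G ⊆ K),
      (((K ∩ K₀) \ G).card).choose s = ((K ∩ K₀).card - d).choose s := by
    intro K hK
    rw [mem_filter] at hK
    congr 1
    have h1 : (K ∩ K₀) \ G = (K ∩ K₀) \ (K₀ ∩ G) := by
      ext x
      simp only [mem_sdiff, mem_inter]
      tauto
    rw [h1, card_sdiff_of_subset (by intro x hx; rw [mem_inter] at hx ⊢; exact ⟨hK.2 hx.2, hx.1⟩), hd]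
  have hm := moment_s14 S hS K₀ G s n (hgc ▸ hs) (hgc ▸ hn)
  rw [Finset.sum_congr rfl key,
    fiber_eq _ (fun K => (K ∩ K₀).card) hbound (fun j => (j - d).choose s), hKG] at hm
  rw [← hm]
  apply Finset.sum_congr rfl
  intro j _
  rw [filter_filter]

lemma G2_facts (pinf p0 : Ω) (K₀ : Finset Ω)
    (hinf0 : pinf ≠ p0) (h0K : p0 ∈ K₀) (hinfK : pinf ∉ K₀) : (K₀ ∩ ({pinf, p0} : Finset Ω)).card = 1 ∧ ({pinf, p0} : Finset Ω).card = 2 := by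
  constructor
  · have : K₀ ∩ ({pinf, p0} : Finset Ω) = {p0} := by
      ext x
      simp only [mem_inter, mem_insert, mem_singleton]
      constructor
      · rintro ⟨hx, rfl | rfl⟩
        · exact absurd hx hinfK
        · rfl
      · rintro rfl
        exact ⟨h0K, Or.inr rfl⟩
    rw [this, card_singleton]
  · rw [card_insert_of_notMem (by simp [hinf0]), card_singleton]

lemma countsG2 (S : Finset (Finset Ω)) (hS : IsSteinerSystem_5_8_24 S)
    (pinf p0 : Ω) (K₀ : Finset Ω) (hK₀S : K₀ ∈ S)
    (hinf0 : pinf ≠ p0) (h0K : p0 ∈ K₀) (hinfK : pinf ∉ K₀) :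
    (∀ j, j = 0 ∨ j = 1 ∨ j = 3 →
      (S.filter (fun K => ({pinf, p0} : Finset Ω) ⊆ K ∧ (K ∩ K₀).card = j)).card = 0) ∧
    (S.filter (fun K => ({pinf, p0} : Finset Ω) ⊆ K ∧ (K ∩ K₀).card = 4)).card = 35 := by
  obtain ⟨hd, hgc⟩ := G2_facts pinf p0 K₀ hinf0 h0K hinfK
  have hG : pinf ∈ ({pinf, p0} : Finset Ω) := mem_insert_self _ _
  have e0 := master S hS K₀ hK₀S pinf hinfK _ hG 0 77 1 2 hd hgc (by norm_num) (by decide)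
  have e1 := master S hS K₀ hK₀S pinf hinfK _ hG 1 21 1 2 hd hgc (by norm_num) (by decide)
  have e2 := master S hS K₀ hK₀S pinf hinfK _ hG 2 5 1 2 hd hgc (by norm_num) (by decide)
  have e3 := master S hS K₀ hK₀S pinf hinfK _ hG 3 1 1 2 hd hgc (by norm_num) (by decide)
  norm_num [Finset.sum_range_succ, Nat.choose, -Finset.card_eq_zero] at e0 e1 e2 e3
  refine ⟨fun j hj => ?_, by omega⟩
  rcases hj with rfl | rfl | rfl <;> omega

lemma count4_d1 (S : Finset (Finset Ω)) (hS : IsSteinerSystem_5_8_24 S)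
    (pinf p0 : Ω) (K₀ : Finset Ω) (hK₀S : K₀ ∈ S)
    (hinf0 : pinf ≠ p0) (h0K : p0 ∈ K₀) (hinfK : pinf ∉ K₀) (G : Finset Ω) (hGp : pinf ∈ G) (hG2 : ({pinf, p0} : Finset Ω) ⊆ G)
    (gc n0 n1 : ℕ) (hd : (K₀ ∩ G).card = 1) (hgc : G.card = gc) (hs : 1 + gc ≤ 5)
    (hn0 : n0 * (8 - gc).choose (5 - gc) = (24 - gc).choose (5 - gc))
    (hn1 : n1 * (8 - (1 + gc)).choose (5 - (1 + gc)) = (24 - (1 + gc)).choose (5 - (1 + gc))) :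
    n0 + 2 * (S.filter (fun K => G ⊆ K ∧ (K ∩ K₀).card = 4)).card = 7 * n1 := by
  have hvan := (countsG2 S hS pinf p0 K₀ hK₀S hinf0 h0K hinfK).1
  have hmono : ∀ j, (S.filter (fun K => G ⊆ K ∧ (K ∩ K₀).card = j)).card ≤
      (S.filter (fun K => ({pinf, p0} : Finset Ω) ⊆ K ∧ (K ∩ K₀).card = j)).card := by
    intro j
    apply card_le_card
    intro K hK
    rw [mem_filter] at hK ⊢
    exact ⟨hK.1, hG2.trans hK.2.1, hK.2.2⟩
  have v0 := hvan 0 (by omega); have v1 := hvan 1 (by omega); have v3 := hvan 3 (by omega)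
  have m0 := hmono 0; have m1 := hmono 1; have m3 := hmono 3
  have e0 := master S hS K₀ hK₀S pinf hinfK G hGp 0 n0 1 gc hd hgc (by omega) (by simpa using hn0)
  have e1 := master S hS K₀ hK₀S pinf hinfK G hGp 1 n1 1 gc hd hgc hs hn1
  norm_num [Finset.sum_range_succ, Nat.choose, -Finset.card_eq_zero] at e0 e1
  omega

lemma count4_d2 (S : Finset (Finset Ω)) (hS : IsSteinerSystem_5_8_24 S)
    (pinf p0 : Ω) (K₀ : Finset Ω) (hK₀S : K₀ ∈ S)
    (hinf0 : pinf ≠ p0) (h0K : p0 ∈ K₀) (hinfK : pinf ∉ K₀) (G : Finset Ω) (hGp : pinf ∈ G) (hG2 : ({pinf, p0} : Finset Ω) ⊆ G)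
    (gc n1 : ℕ) (hd : (K₀ ∩ G).card = 2) (hgc : G.card = gc) (hs : 1 + gc ≤ 5)
    (hn1 : n1 * (8 - (1 + gc)).choose (5 - (1 + gc)) = (24 - (1 + gc)).choose (5 - (1 + gc))) :
    (S.filter (fun K => G ⊆ K ∧ (K ∩ K₀).card = 4)).card = 3 * n1 := by
  have hvan := (countsG2 S hS pinf p0 K₀ hK₀S hinf0 h0K hinfK).1
  have hmono : ∀ j, (S.filter (fun K => G ⊆ K ∧ (K ∩ K₀).card = j)).card ≤
      (S.filter (fun K => ({pinf, p0} : Finset Ω) ⊆ K ∧ (K ∩ K₀).card = j)).card := by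
    intro j
    apply card_le_card
    intro K hK
    rw [mem_filter] at hK ⊢
    exact ⟨hK.1, hG2.trans hK.2.1, hK.2.2⟩
  have v3 := hvan 3 (by omega)
  have m3 := hmono 3
  have e1 := master S hS K₀ hK₀S pinf hinfK G hGp 1 n1 2 gc hd hgc hs hn1
  norm_num [Finset.sum_range_succ, Nat.choose, -Finset.card_eq_zero] at e1
  omega

lemma split_card (S : Finset (Finset Ω)) (p1 : Ω) (P : Finset Ω → Prop) [DecidablePred P] :
    (S.filter (fun K => P K ∧ p1 ∉ K)).card + (S.filter (fun K => P K ∧ p1 ∈ K)).card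
      = (S.filter P).card := by
  rw [← filter_filter, ← filter_filter, add_comm]
  exact card_filter_add_card_filter_not (fun K => p1 ∈ K)

lemma key_counts (S : Finset (Finset Ω)) (hS : IsSteinerSystem_5_8_24 S)
    (pinf p0 p1 : Ω) (h01 : p0 ≠ p1) (hinf0 : pinf ≠ p0) (hinf1 : pinf ≠ p1)
    (K₀ : Finset Ω) (hK₀S : K₀ ∈ S)
    (h0K : p0 ∈ K₀) (hinfK : pinf ∉ K₀) (h1K : p1 ∉ K₀) :
    (S.filter (fun K => pinf ∈ K ∧ p0 ∈ K ∧ p1 ∉ K ∧ (K ∩ K₀).card = 4)).card = 28 ∧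
    ∀ i : Ω, i ≠ pinf → i ≠ p0 → i ≠ p1 →
      ((S.filter (fun K => pinf ∈ K ∧ p0 ∈ K ∧ p1 ∉ K ∧ (K ∩ K₀).card = 4)).filter
        (fun K => i ∈ K)).card = if i ∈ K₀ then 12 else 6 := by
  have hA := (countsG2 S hS pinf p0 K₀ hK₀S hinf0 h0K hinfK).2
  constructor
  · -- |F| = 28
    have hB : ({pinf, p0} : Finset Ω) ⊆ ({pinf, p0, p1} : Finset Ω) := by
      intro x hx
      simp only [mem_insert, mem_singleton] at hx ⊢
      tauto
    have hd3 : (K₀ ∩ ({pinf, p0, p1} : Finset Ω)).card = 1 := by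
      have : K₀ ∩ ({pinf, p0, p1} : Finset Ω) = {p0} := by
        ext x
        simp only [mem_inter, mem_insert, mem_singleton]
        constructor
        · rintro ⟨hx, rfl | rfl | rfl⟩
          · exact absurd hx hinfK
          · rfl
          · exact absurd hx h1K
        · rintro rfl
          exact ⟨h0K, Or.inr (Or.inl rfl)⟩
      rw [this, card_singleton]
    have hgc3 : ({pinf, p0, p1} : Finset Ω).card = 3 := by
      rw [card_insert_of_notMem (by simp [hinf0, hinf1]),
        card_insert_of_notMem (by simp [h01]), card_singleton]
    have hB7 := count4_d1 S hS pinf p0 K₀ hK₀S hinf0 h0K hinfK _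
      (mem_insert_self _ _) hB 3 21 5 hd3 hgc3 (by norm_num) (by decide) (by decide)
    have hsplit := split_card S p1 (fun K => ({pinf, p0} : Finset Ω) ⊆ K ∧ (K ∩ K₀).card = 4)
    have hre1 : S.filter (fun K => (({pinf, p0} : Finset Ω) ⊆ K ∧ (K ∩ K₀).card = 4) ∧ p1 ∈ K)
        = S.filter (fun K => ({pinf, p0, p1} : Finset Ω) ⊆ K ∧ (K ∩ K₀).card = 4) := by
      apply filter_congr
      intro K _
      simp only [insert_subset_iff, singleton_subset_iff]
      tauto
    have hre2 : S.filter (fun K => pinf ∈ K ∧ p0 ∈ K ∧ p1 ∉ K ∧ (K ∩ K₀).card = 4)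
        = S.filter (fun K => (({pinf, p0} : Finset Ω) ⊆ K ∧ (K ∩ K₀).card = 4) ∧ p1 ∉ K) := by
      apply filter_congr
      intro K _
      simp only [insert_subset_iff, singleton_subset_iff]
      tauto
    rw [hre1] at hsplit
    rw [hre2]
    omega
  · -- point counts
    intro i hiinf hi0 hi1
    -- canonical forms
    have hGi : pinf ∈ insert i ({pinf, p0} : Finset Ω) := mem_insert_of_mem (mem_insert_self _ _)
    have hGi' : pinf ∈ insert i ({pinf, p0, p1} : Finset Ω) :=
      mem_insert_of_mem (mem_insert_self _ _)
    have hsubi : ({pinf, p0} : Finset Ω) ⊆ insert i ({pinf, p0} : Finset Ω) :=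
      subset_insert _ _
    have hsubi' : ({pinf, p0} : Finset Ω) ⊆ insert i ({pinf, p0, p1} : Finset Ω) := by
      intro x hx
      simp only [mem_insert, mem_singleton] at hx ⊢
      tauto
    have hgci : (insert i ({pinf, p0} : Finset Ω)).card = 3 := by
      rw [card_insert_of_notMem (by simp [hiinf, hi0]),
        card_insert_of_notMem (by simp [hinf0]), card_singleton]
    have hgci' : (insert i ({pinf, p0, p1} : Finset Ω)).card = 4 := by
      rw [card_insert_of_notMem (by simp [hiinf, hi0, hi1]),
        card_insert_of_notMem (by simp [hinf0, hinf1]),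
        card_insert_of_notMem (by simp [h01]), card_singleton]
    have hsplit := split_card S p1
      (fun K => insert i ({pinf, p0} : Finset Ω) ⊆ K ∧ (K ∩ K₀).card = 4)
    have hre1 : S.filter
        (fun K => (insert i ({pinf, p0} : Finset Ω) ⊆ K ∧ (K ∩ K₀).card = 4) ∧ p1 ∈ K)
        = S.filter (fun K => insert i ({pinf, p0, p1} : Finset Ω) ⊆ K ∧ (K ∩ K₀).card = 4) := by
      apply filter_congr
      intro K _
      simp only [insert_subset_iff, singleton_subset_iff]
      tauto
    have hre2 : (S.filter (fun K => pinf ∈ K ∧ p0 ∈ K ∧ p1 ∉ K ∧ (K ∩ K₀).card = 4)).filter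
        (fun K => i ∈ K)
        = S.filter
          (fun K => (insert i ({pinf, p0} : Finset Ω) ⊆ K ∧ (K ∩ K₀).card = 4) ∧ p1 ∉ K) := by
      rw [filter_filter]
      apply filter_congr
      intro K _
      simp only [insert_subset_iff, singleton_subset_iff]
      tauto
    rw [hre1] at hsplit
    rw [hre2]
    by_cases hiK : i ∈ K₀
    · -- d = 2 cases
      have hdi : (K₀ ∩ insert i ({pinf, p0} : Finset Ω)).card = 2 := by
        have : K₀ ∩ insert i ({pinf, p0} : Finset Ω) = {i, p0} := by
          ext x
          simp only [mem_inter, mem_insert, mem_singleton]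
          constructor
          · rintro ⟨hx, rfl | rfl | rfl⟩
            · exact Or.inl rfl
            · exact absurd hx hinfK
            · exact Or.inr rfl
          · rintro (rfl | rfl)
            · exact ⟨hiK, Or.inl rfl⟩
            · exact ⟨h0K, Or.inr (Or.inr rfl)⟩
        rw [this, card_insert_of_notMem (by simp [hi0]), card_singleton]
      have hdi' : (K₀ ∩ insert i ({pinf, p0, p1} : Finset Ω)).card = 2 := by
        have : K₀ ∩ insert i ({pinf, p0, p1} : Finset Ω) = {i, p0} := by
          ext x
          simp only [mem_inter, mem_insert, mem_singleton]
          constructor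
          · rintro ⟨hx, rfl | rfl | rfl | rfl⟩
            · exact Or.inl rfl
            · exact absurd hx hinfK
            · exact Or.inr rfl
            · exact absurd hx h1K
          · rintro (rfl | rfl)
            · exact ⟨hiK, Or.inl rfl⟩
            · exact ⟨h0K, Or.inr (Or.inr (Or.inl rfl))⟩
        rw [this, card_insert_of_notMem (by simp [hi0]), card_singleton]
      have hc1 := count4_d2 S hS pinf p0 K₀ hK₀S hinf0 h0K hinfK _
        hGi hsubi 3 5 hdi hgci (by norm_num) (by decide)
      have hc2 := count4_d2 S hS pinf p0 K₀ hK₀S hinf0 h0K hinfK _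
        hGi' hsubi' 4 1 hdi' hgci' (by norm_num) (by decide)
      rw [if_pos hiK]
      omega
    · -- d = 1 cases
      have hdi : (K₀ ∩ insert i ({pinf, p0} : Finset Ω)).card = 1 := by
        have : K₀ ∩ insert i ({pinf, p0} : Finset Ω) = {p0} := by
          ext x
          simp only [mem_inter, mem_insert, mem_singleton]
          constructor
          · rintro ⟨hx, rfl | rfl | rfl⟩
            · exact absurd hx hiK
            · exact absurd hx hinfK
            · rfl
          · rintro rfl
            exact ⟨h0K, Or.inr (Or.inr rfl)⟩
        rw [this, card_singleton]
      have hdi' : (K₀ ∩ insert i ({pinf, p0, p1} : Finset Ω)).card = 1 := by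
        have : K₀ ∩ insert i ({pinf, p0, p1} : Finset Ω) = {p0} := by
          ext x
          simp only [mem_inter, mem_insert, mem_singleton]
          constructor
          · rintro ⟨hx, rfl | rfl | rfl | rfl⟩
            · exact absurd hx hiK
            · exact absurd hx hinfK
            · rfl
            · exact absurd hx h1K
          · rintro rfl
            exact ⟨h0K, Or.inr (Or.inr (Or.inl rfl))⟩
        rw [this, card_singleton]
      have hc1 := count4_d1 S hS pinf p0 K₀ hK₀S hinf0 h0K hinfK _
        hGi hsubi 3 21 5 hdi hgci (by norm_num) (by decide) (by decide)
      have hc2 := count4_d1 S hS pinf p0 K₀ hK₀S hinf0 h0K hinfK _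
        hGi' hsubi' 4 5 1 hdi' hgci' (by norm_num) (by decide) (by decide)
      rw [if_neg hiK]
      omega

end AuxCounting

set_option maxHeartbeats 1000000 in
/-- The projection `w' = w − w''` of the Weyl vector `w = (1,0,0)` to the
orthogonal complement of the `A₆` equals the sum of the 28 Leech roots
`(1, 1, 2ν_K)` over the octads `K ∈ F`. -/
theorem weyl_vector_is_sum_of_28_leech_roots {Ω : Type*} [Fintype Ω] [DecidableEq Ω]
    (S : Finset (Finset Ω)) (hS : IsSteinerSystem_5_8_24 S)
    (pinf p0 p1 : Ω) (h01 : p0 ≠ p1) (hinf0 : pinf ≠ p0) (hinf1 : pinf ≠ p1)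
    (K₀ : Finset Ω) (hK₀S : K₀ ∈ S)
    (h0K : p0 ∈ K₀) (hinfK : pinf ∉ K₀) (h1K : p1 ∉ K₀)
    (v : Fin 6 → ℚ × ℚ × (Ω → ℚ)) (hv : v = a6Roots pinf p0 p1 K₀)
    (w : ℚ × ℚ × (Ω → ℚ)) (hw : w = (1, 0, 0))
    (w'' : ℚ × ℚ × (Ω → ℚ))
    (hw'' : w'' = (-3 : ℚ) • v 0 + (-5 : ℚ) • v 1 + (-6 : ℚ) • v 2 +
      (-6 : ℚ) • v 3 + (-5 : ℚ) • v 4 + (-3 : ℚ) • v 5)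
    (F : Finset (Finset Ω))
    (hF : F = S.filter fun K => pinf ∈ K ∧ p0 ∈ K ∧ p1 ∉ K ∧ (K ∩ K₀).card = 4) :
    w - w'' = ∑ K ∈ F, ((1, 1, fun i => 2 * ind K i) : ℚ × ℚ × (Ω → ℚ)) := by
  obtain ⟨hc28, hpt⟩ := key_counts S hS pinf p0 p1 h01 hinf0 hinf1 K₀ hK₀S h0K hinfK h1K
  have hFcard : F.card = 28 := by rw [hF]; exact hc28
  have hmem : ∀ K ∈ F, pinf ∈ K ∧ p0 ∈ K ∧ p1 ∉ K := by
    intro K hK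
    rw [hF, mem_filter] at hK
    tauto
  subst hv hw hw''
  have hv0 : a6Roots pinf p0 p1 K₀ 0 = (2, 1, fun i => 4 * ind {p0} i + 1) := rfl
  have hv1 : a6Roots pinf p0 p1 K₀ 1 = (-1, 1, fun _ => 0) := rfl
  have hv2 : a6Roots pinf p0 p1 K₀ 2 = (2, 1, fun i => 4 * ind {pinf} i + 1) := rfl
  have hv3 : a6Roots pinf p0 p1 K₀ 3 = (1, 1, fun i => 2 * ind K₀ i) := rfl
  have hv4 : a6Roots pinf p0 p1 K₀ 4 = (1, 1, fun i => 4 * ind {pinf} i + 4 * ind {p0} i) := rfl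
  have hv5 : a6Roots pinf p0 p1 K₀ 5 = (1, 1, fun i => 1 - 4 * ind {p1} i) := rfl
  rw [hv0, hv1, hv2, hv3, hv4, hv5]
  refine Prod.ext ?_ (Prod.ext ?_ ?_)
  · -- first component
    rw [Prod.fst_sub, Prod.fst_sum]
    simp only [Prod.fst_add, Prod.smul_fst, smul_eq_mul]
    rw [Finset.sum_const, hFcard]
    norm_num
  · -- second component
    rw [Prod.snd_sub, Prod.snd_sum, Prod.fst_sub]
    simp only [Prod.snd_add, Prod.smul_snd, Prod.fst_add, Prod.smul_fst, smul_eq_mul,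
      Prod.fst_sum]
    rw [Finset.sum_const, hFcard]
    norm_num
  · -- third component
    rw [Prod.snd_sub, Prod.snd_sub, Prod.snd_sum, Prod.snd_sum]
    simp only [Prod.snd_add, Prod.smul_snd]
    funext i
    simp only [Pi.sub_apply, Pi.add_apply, Pi.smul_apply, smul_eq_mul, Finset.sum_apply,
      Pi.zero_apply]
    have hRHS : (∑ K ∈ F, 2 * ind K i) = 2 * ((F.filter (fun K => i ∈ K)).card : ℚ) := by
      rw [← Finset.mul_sum]
      congr 1
      simp only [ind]
      rw [Finset.sum_boole]
    rw [hRHS]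
    by_cases hiinf : i = pinf
    · subst hiinf
      have : F.filter (fun K => i ∈ K) = F :=
        filter_true_of_mem (fun K hK => (hmem K hK).1)
      rw [this, hFcard]
      simp [ind, hinf0, hinf1, hinfK]
      norm_num
    · by_cases hi0 : i = p0
      · subst hi0
        have : F.filter (fun K => i ∈ K) = F :=
          filter_true_of_mem (fun K hK => (hmem K hK).2.1)
        rw [this, hFcard]
        simp [ind, hinf0.symm, h01, h0K]
        norm_num
      · by_cases hi1 : i = p1
        · subst hi1
          have : F.filter (fun K => i ∈ K) = ∅ :=
            filter_false_of_mem (fun K hK => (hmem K hK).2.2)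
          rw [this]
          simp [ind, hinf1.symm, h01.symm, h1K]
          norm_num
        · have hcnt := hpt i hiinf hi0 hi1
          rw [← hF] at hcnt
          rw [hcnt]
          by_cases hiK : i ∈ K₀
          · rw [if_pos hiK]
            simp [ind, hiinf, hi0, hi1, hiK]
            norm_num
          · rw [if_neg hiK]
            simp [ind, hiinf, hi0, hi1, hiK]
            norm_num
end

section
/- Let N be a finitely generated free ℤ-module with a symmetric bilinear form that is negative definite, even (⟨λ,λ⟩ ∈ 2ℤ for all λ), and contains no vector of norm −2. Form the lattice U ⊕ N, where U is the hyperbolic plane with form ⟨(m,n),(m',n')⟩ = mn' + m'n, and for λ ∈ N let r_λ = (−1 − ⟨λ,λ⟩/2, 1, λ) be the associated Leech root. Then for any two distinct λ₁, λ₂ ∈ N one has ⟨r_{λ₁}, r_{λ₂}⟩ = −2 − ⟨λ₁ − λ₂, λ₁ − λ₂⟩/2 ≥ 0. -/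
/-- The bilinear form on `U ⊕ N` (vectors written `(m, n, λ)`), where `U` is the
hyperbolic plane with `⟨(m,n),(m',n')⟩ = mn' + m'n` and `N` carries the bilinear
form `B`. -/
def uPair {N : Type*} [AddCommGroup N] [Module ℤ N]
    (B : N →ₗ[ℤ] N →ₗ[ℤ] ℤ) (v w : ℤ × ℤ × N) : ℤ :=
  v.1 * w.2.1 + w.1 * v.2.1 + B v.2.2 w.2.2

/-- The Leech root `r_λ = (−1 − ⟨λ,λ⟩/2, 1, λ)` associated to `λ ∈ N`. -/
def leechRoot {N : Type*} [AddCommGroup N] [Module ℤ N]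
    (B : N →ₗ[ℤ] N →ₗ[ℤ] ℤ) (lam : N) : ℤ × ℤ × N :=
  (-1 - B lam lam / 2, 1, lam)

/-- If `N` is a finitely generated free ℤ-module with a symmetric, negative
definite, even bilinear form having no vector of norm `−2`, then any two
distinct Leech roots in `U ⊕ N` satisfy
`⟨r_{λ₁}, r_{λ₂}⟩ = −2 − ⟨λ₁−λ₂, λ₁−λ₂⟩/2 ≥ 0`. -/
theorem distinct_leech_roots_pair_nonneg {N : Type*} [AddCommGroup N] [Module ℤ N]
    [Module.Free ℤ N] [Module.Finite ℤ N]
    (B : N →ₗ[ℤ] N →ₗ[ℤ] ℤ)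
    (hsymm : ∀ a b : N, B a b = B b a)
    (hneg : ∀ a : N, a ≠ 0 → B a a < 0)
    (heven : ∀ a : N, Even (B a a))
    (hnoroot : ∀ a : N, B a a ≠ -2) :
    ∀ lam₁ lam₂ : N, lam₁ ≠ lam₂ →
      uPair B (leechRoot B lam₁) (leechRoot B lam₂) =
        -2 - B (lam₁ - lam₂) (lam₁ - lam₂) / 2 ∧
      0 ≤ uPair B (leechRoot B lam₁) (leechRoot B lam₂) := by
  intro lam₁ lam₂ hne
  obtain ⟨k₁, hk₁⟩ := heven lam₁
  obtain ⟨k₂, hk₂⟩ := heven lam₂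
  have hd : B (lam₁ - lam₂) (lam₁ - lam₂)
      = B lam₁ lam₁ - 2 * B lam₁ lam₂ + B lam₂ lam₂ := by
    simp only [map_sub, LinearMap.sub_apply]
    rw [hsymm lam₂ lam₁]; ring
  have hdval : B (lam₁ - lam₂) (lam₁ - lam₂) = 2 * (k₁ + k₂ - B lam₁ lam₂) := by
    rw [hd, hk₁, hk₂]; ring
  have hdd : B (lam₁ - lam₂) (lam₁ - lam₂) / 2 = k₁ + k₂ - B lam₁ lam₂ := by
    rw [hdval]; omega
  have h1 : B lam₁ lam₁ / 2 = k₁ := by rw [hk₁]; omega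
  have h2 : B lam₂ lam₂ / 2 = k₂ := by rw [hk₂]; omega
  have heq : uPair B (leechRoot B lam₁) (leechRoot B lam₂)
      = -2 - B (lam₁ - lam₂) (lam₁ - lam₂) / 2 := by
    simp only [uPair, leechRoot, h1, h2, hdd]; ring
  refine ⟨heq, ?_⟩
  have hne' : lam₁ - lam₂ ≠ 0 := sub_ne_zero.mpr hne
  have hlt := hneg _ hne'
  have hno := hnoroot (lam₁ - lam₂)
  rw [heq]
  omega
end
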